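/- arXiv:2002.02246 — 9 statements merged into one kernel-verified Lean document; each statement's English description precedes it below -/
import Mathlib

section
/- Let Γ ⊆ [0,1]. Then D(D(Γ)) = D(Γ) ∪ {1}, where D(Γ) := { a ≤ 1 | a = (m-1+f)/m for some positive integer m and f ∈ Γ₊ }, and Γ₊ := {0} ∪ { finite sums of elements of Γ that are ≤ 1 }. -/
open scoped BigOperators

/-- `Γ₊`: {0} together with all finite sums of elements of `Γ` which are at most 1. -/
def plusSet (Γ : Set ℝ) : Set ℝ :=
  insert 0 {x | ∃ (l : ℕ) (f : Fin l → ℝ), 0 < l ∧ (∀ p, f p ∈ Γ) ∧ x = ∑ p, f p ∧ x ≤ 1}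

/-- `D(Γ) := { a ≤ 1 | a = (m-1+f)/m, m ∈ ℤ_{>0}, f ∈ Γ₊ }`. -/
def DSet (Γ : Set ℝ) : Set ℝ :=
  {a | a ≤ 1 ∧ ∃ (m : ℕ) (f : ℝ), 0 < m ∧ f ∈ plusSet Γ ∧ a = ((m : ℝ) - 1 + f) / m}

/-! `Γ₊` is the part of the additive closure of `Γ` lying below `1`. Every element of `D(Γ)`
written with `m ≥ 2` is at least `1/2`, so a sum of elements of `D(Γ)` below `1` has at most one
summand outside `Γ₊`, say `(n - 1 + f) / n`, and the other summands add up to some `s` in the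
additive closure of `Γ`. Then `(m - 1 + (n - 1 + f) / n + s) / m = (m n - 1 + (f + n s)) / (m n)`
lies in `D(Γ)`. Conversely `D(Γ) ⊆ D(Γ)₊`, and `1 = 1/2 + 1/2 ∈ D(Γ)₊`. -/

section

variable {Γ : Set ℝ}

theorem mem_plusSet_iff {x : ℝ} :
    x ∈ plusSet Γ ↔ x ∈ AddSubmonoid.closure Γ ∧ x ≤ 1 := by
  constructor
  · rintro (rfl | ⟨l, f, -, hf, rfl, hle⟩)
    · exact ⟨zero_mem _, zero_le_one⟩
    · exact ⟨sum_mem fun p _ => AddSubmonoid.subset_closure (hf p), hle⟩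
  · rintro ⟨hx, hle⟩
    obtain ⟨L, hL, rfl⟩ := AddSubmonoid.exists_list_of_mem_closure hx
    rcases eq_or_ne L [] with rfl | hL0
    · exact Set.mem_insert _ _
    · refine Or.inr ⟨L.length, L.get, List.length_pos_iff.2 hL0,
        fun p => hL _ (L.get_mem p), ?_, hle⟩
      rw [← List.sum_ofFn, List.ofFn_get]

theorem mem_plusSet_of_mem {x : ℝ} (hx : x ∈ Γ) (hx1 : x ≤ 1) : x ∈ plusSet Γ :=
  mem_plusSet_iff.2 ⟨AddSubmonoid.subset_closure hx, hx1⟩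

theorem plusSet_subset_DSet : plusSet Γ ⊆ DSet Γ := fun f hf =>
  ⟨(mem_plusSet_iff.1 hf).2, 1, f, one_pos, hf, by simp⟩

theorem zero_mem_DSet : (0 : ℝ) ∈ DSet Γ :=
  plusSet_subset_DSet (Set.mem_insert _ _)

theorem one_mem_plusSet_DSet : (1 : ℝ) ∈ plusSet (DSet Γ) := by
  have hhalf : (1 / 2 : ℝ) ∈ DSet Γ :=
    ⟨by norm_num, 2, 0, two_pos, Set.mem_insert _ _, by norm_num⟩
  refine mem_plusSet_iff.2 ⟨?_, le_rfl⟩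
  rw [← add_halves (1 : ℝ)]
  exact add_mem (AddSubmonoid.subset_closure hhalf) (AddSubmonoid.subset_closure hhalf)

theorem closure_subset_Ici {S : Set ℝ} (hS : S ⊆ Set.Ici 0) :
    (AddSubmonoid.closure S : Set ℝ) ⊆ Set.Ici 0 :=
  AddSubmonoid.closure_le (S := AddSubmonoid.nonneg ℝ).2 hS

theorem DSet_subset_Ici (hΓ : Γ ⊆ Set.Ici 0) : DSet Γ ⊆ Set.Ici 0 := by
  rintro _ ⟨-, m, f, hm, hf, rfl⟩
  have hf0 : 0 ≤ f := closure_subset_Ici hΓ (mem_plusSet_iff.1 hf).1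
  have hm1 : (1 : ℝ) ≤ m := by exact_mod_cast hm
  exact Set.mem_Ici.2 (div_nonneg (by linarith) (by linarith))

theorem mem_plusSet_of_mem_DSet_of_lt_half (hΓ : Γ ⊆ Set.Ici 0) {d : ℝ} (hd : d ∈ DSet Γ)
    (hd2 : d < 1 / 2) :
    d ∈ plusSet Γ := by
  obtain ⟨-, m, f, hm, hf, rfl⟩ := hd
  obtain rfl | hm2 : m = 1 ∨ 2 ≤ m := by omega
  · simpa using hf
  · have hf0 : 0 ≤ f := closure_subset_Ici hΓ (mem_plusSet_iff.1 hf).1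
    have hm2 : (2 : ℝ) ≤ m := by exact_mod_cast hm2
    rw [div_lt_iff₀ (by linarith)] at hd2
    linarith

theorem exists_eq_add_of_mem_closure_DSet (hΓ : Γ ⊆ Set.Ici 0) {x : ℝ}
    (hx : x ∈ AddSubmonoid.closure (DSet Γ)) (hx1 : x < 1) :
    ∃ d ∈ DSet Γ, ∃ s ∈ AddSubmonoid.closure Γ, x = d + s := by
  have hD := DSet_subset_Ici hΓ
  induction hx using AddSubmonoid.closure_induction with
  | mem x hx => exact ⟨x, hx, 0, zero_mem _, (add_zero x).symm⟩
  | zero => exact ⟨0, zero_mem_DSet, 0, zero_mem _, (add_zero 0).symm⟩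
  | add x y hx hy ihx ihy =>
    have hx0 : 0 ≤ x := closure_subset_Ici hD hx
    have hy0 : 0 ≤ y := closure_subset_Ici hD hy
    obtain ⟨d₁, hd₁, s₁, hs₁, rfl⟩ := ihx (by linarith)
    obtain ⟨d₂, hd₂, s₂, hs₂, rfl⟩ := ihy (by linarith)
    have hs₁0 : 0 ≤ s₁ := closure_subset_Ici hΓ hs₁
    have hs₂0 : 0 ≤ s₂ := closure_subset_Ici hΓ hs₂
    have hd₁0 : 0 ≤ d₁ := hD hd₁
    have hd₂0 : 0 ≤ d₂ := hD hd₂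
    by_cases h₁ : d₁ < 1 / 2
    · have hd₁s := (mem_plusSet_iff.1 (mem_plusSet_of_mem_DSet_of_lt_half hΓ hd₁ h₁)).1
      exact ⟨d₂, hd₂, d₁ + s₁ + s₂, add_mem (add_mem hd₁s hs₁) hs₂, by ring⟩
    · have hd₂s := (mem_plusSet_iff.1
        (mem_plusSet_of_mem_DSet_of_lt_half hΓ hd₂ (by linarith))).1
      exact ⟨d₁, hd₁, s₁ + d₂ + s₂, add_mem (add_mem hs₁ hd₂s) hs₂, by ring⟩

theorem DSet_DSet_subset (hΓ : Γ ⊆ Set.Ici 0) : DSet (DSet Γ) ⊆ DSet Γ ∪ {1} := by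
  rintro a ⟨ha1, m, g, hm, hg, rfl⟩
  have hm0 : (m : ℝ) ≠ 0 := by positivity
  obtain ⟨hg, hg1⟩ := mem_plusSet_iff.1 hg
  obtain rfl | hg1 := hg1.eq_or_lt
  · right
    simp [hm0]
  obtain ⟨_, ⟨-, n, f, hn, hf, rfl⟩, s, hs, rfl⟩ :=
    exists_eq_add_of_mem_closure_DSet hΓ hg hg1
  have hn0 : (n : ℝ) ≠ 0 := by positivity
  have hmn : (0 : ℝ) < ↑(m * n) := by positivity
  have key : ((m : ℝ) - 1 + ((n - 1 + f) / n + s)) / m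
      = (↑(m * n) - 1 + (f + n * s)) / ↑(m * n) := by
    push_cast
    field_simp
    ring
  rw [key] at ha1 ⊢
  have hF1 : f + n * s ≤ 1 := by
    rw [div_le_one hmn] at ha1
    linarith
  have hF : f + n * s ∈ AddSubmonoid.closure Γ := by
    rw [← nsmul_eq_mul]
    exact add_mem (mem_plusSet_iff.1 hf).1 (nsmul_mem hs n)
  exact Or.inl ⟨ha1, m * n, f + n * s, Nat.mul_pos hm hn, mem_plusSet_iff.2 ⟨hF, hF1⟩, rfl⟩

end

/-- Lemma 3.6 ([HMX14, Prop 3.4.1]): for `Γ ⊆ [0,1]`, `D(D(Γ)) = D(Γ) ∪ {1}`. -/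
theorem stmt_2 (Γ : Set ℝ) (hΓ : Γ ⊆ Set.Icc (0 : ℝ) 1) :
    DSet (DSet Γ) = DSet Γ ∪ {1} := by
  refine (DSet_DSet_subset (hΓ.trans Set.Icc_subset_Ici_self)).antisymm ?_
  rintro a (ha | rfl)
  · exact plusSet_subset_DSet (mem_plusSet_of_mem ha ha.1)
  · exact plusSet_subset_DSet one_mem_plusSet_DSet
end

section
/- Let Γ ⊆ ℝ_{≥0} be a bounded set satisfying the descending chain condition, Γ'' = closure(Γ'') a set satisfying the ascending chain condition, and α > 0. Then there exist a finite set Γ' ⊆ closure(Γ) and a map g: closure(Γ) → Γ' with g∘g = g such that: (1) γ ≤ g(γ) ≤ γ + α for all γ ∈ Γ; (2) g is monotone: γ ≤ γ' implies g(γ) ≤ g(γ'); (3) for any β ∈ Γ'' and γ ∈ Γ, if β ≥ γ then β ≥ g(γ). -/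
/-- A set of reals satisfies the descending chain condition if every non-increasing
sequence in it stabilizes. -/
def IsDCC (S : Set ℝ) : Prop :=
  ∀ f : ℕ → ℝ, (∀ n, f n ∈ S) → Antitone f → ∃ N, ∀ n, N ≤ n → f n = f N

/-- A set of reals satisfies the ascending chain condition if every non-decreasing
sequence in it stabilizes. -/
def IsACC (S : Set ℝ) : Prop :=
  ∀ f : ℕ → ℝ, (∀ n, f n ∈ S) → Monotone f → ∃ N, ∀ n, N ≤ n → f n = f N

lemma dcc_gap {Γ : Set ℝ} (hdcc : IsDCC Γ) (x : ℝ) :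
    ∃ δ > 0, ∀ y ∈ closure Γ, x < y → x + δ ≤ y := by
  by_contra h
  push_neg at h
  have key : ∀ y : ℝ, x < y → ∃ γ, γ ∈ Γ ∧ x < γ ∧ γ < y := by
    intro y hy
    obtain ⟨z, hz, hxz, hzy⟩ := h (y - x) (by linarith)
    have hzlt : z < y := by linarith
    obtain ⟨γ, hγ1, hγ2⟩ := mem_closure_iff.mp hz (Set.Ioo x y) isOpen_Ioo ⟨hxz, hzlt⟩
    exact ⟨γ, hγ2, hγ1.1, hγ1.2⟩
  choose pick h1 h2 h3 using key
  obtain ⟨z0, hz0, hxz0, _⟩ := h 1 one_pos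
  obtain ⟨γ0, hγ0o, hγ0⟩ := mem_closure_iff.mp hz0 (Set.Ioi x) isOpen_Ioi hxz0
  let f : ℕ → {y : ℝ // y ∈ Γ ∧ x < y} := fun n =>
    Nat.rec ⟨γ0, hγ0, hγ0o⟩ (fun _ p => ⟨pick p.1 p.2.2, h1 p.1 p.2.2, h2 p.1 p.2.2⟩) n
  have hstep : ∀ n, (f (n + 1)).1 < (f n).1 := fun n => h3 (f n).1 (f n).2.2
  obtain ⟨N, hN⟩ := hdcc (fun n => (f n).1) (fun n => (f n).2.1)
    (strictAnti_nat_of_succ_lt hstep).antitone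
  exact absurd (hN (N + 1) (Nat.le_succ N)) (ne_of_lt (hstep N))

lemma acc_gap {S : Set ℝ} (hacc : IsACC S) (x : ℝ) :
    ∃ ε > 0, ∀ β ∈ S, β < x → β ≤ x - ε := by
  by_contra h
  push_neg at h
  have key : ∀ y : ℝ, y < x → ∃ β, β ∈ S ∧ β < x ∧ y < β := by
    intro y hy
    obtain ⟨β, hβ, hb1, hb2⟩ := h (x - y) (by linarith)
    exact ⟨β, hβ, hb1, by linarith⟩
  choose pick h1 h2 h3 using key
  obtain ⟨β0, hβ0, hβ0x, _⟩ := h 1 one_pos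
  let f : ℕ → {y : ℝ // y ∈ S ∧ y < x} := fun n =>
    Nat.rec ⟨β0, hβ0, hβ0x⟩ (fun _ p => ⟨pick p.1 p.2.2, h1 p.1 p.2.2, h2 p.1 p.2.2⟩) n
  have hstep : ∀ n, (f n).1 < (f (n + 1)).1 := fun n => h3 (f n).1 (f n).2.2
  obtain ⟨N, hN⟩ := hacc (fun n => (f n).1) (fun n => (f n).2.1)
    (strictMono_nat_of_lt_succ hstep).monotone
  exact absurd (hN (N + 1) (Nat.le_succ N)) (ne_of_gt (hstep N))

/-- Lemma 4.8: for a bounded DCC set `Γ ⊆ ℝ_{≥0}`, a closed ACC set `Γ''`, and `α > 0`,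
there are a finite set `Γ' ⊆ closure Γ` and a projection `g : closure Γ → Γ'` (`g∘g = g`)
with (1) `γ ≤ g γ ≤ γ + α` on `Γ`; (2) `g` monotone on `Γ`; (3) for `β ∈ Γ''`, `γ ∈ Γ`,
`γ ≤ β → g γ ≤ β`. -/
theorem stmt_3 (α : ℝ) (hα : 0 < α) (Γ Γ'' : Set ℝ)
    (hΓpos : ∀ x ∈ Γ, 0 ≤ x) (hbdd : BddAbove Γ) (hdcc : IsDCC Γ)
    (hcl : Γ'' = closure Γ'') (hacc : IsACC Γ'') :
    ∃ (Γ' : Set ℝ) (g : ℝ → ℝ), Γ'.Finite ∧ Γ' ⊆ closure Γ ∧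
      (∀ x ∈ closure Γ, g x ∈ Γ') ∧ (∀ x ∈ closure Γ, g (g x) = g x) ∧
      (∀ γ ∈ Γ, γ ≤ g γ ∧ g γ ≤ γ + α) ∧
      (∀ γ ∈ Γ, ∀ γ' ∈ Γ, γ ≤ γ' → g γ ≤ g γ') ∧
      (∀ β ∈ Γ'', ∀ γ ∈ Γ, γ ≤ β → g γ ≤ β) := by
  classical
  obtain ⟨M, hM⟩ := hbdd
  have hb : Bornology.IsBounded Γ :=
    (Metric.isBounded_Icc 0 M).subset (fun x hx => ⟨hΓpos x hx, hM hx⟩)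
  have hTc : IsCompact (closure Γ) :=
    Metric.isCompact_of_isClosed_isBounded isClosed_closure hb.closure
  have cover : ∀ x : ℝ, ∃ δ > 0, ∀ γ ∈ closure Γ, |γ - x| < δ →
      γ ≤ x ∧ x ≤ γ + α ∧ ∀ β ∈ Γ'', γ ≤ β → x ≤ β := by
    intro x
    obtain ⟨δ₁, hδ₁, hA⟩ := dcc_gap hdcc x
    obtain ⟨δ₂, hδ₂, hB⟩ := acc_gap hacc x
    refine ⟨min δ₁ (min δ₂ α), by positivity, ?_⟩
    intro γ hγ hdist
    have d1 : min δ₁ (min δ₂ α) ≤ δ₁ := min_le_left _ _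
    have d2 : min δ₁ (min δ₂ α) ≤ δ₂ := le_trans (min_le_right _ _) (min_le_left _ _)
    have d3 : min δ₁ (min δ₂ α) ≤ α := le_trans (min_le_right _ _) (min_le_right _ _)
    rw [abs_sub_lt_iff] at hdist
    have hγx : γ ≤ x := by
      by_contra hc
      push_neg at hc
      have := hA γ hγ hc
      linarith [hdist.1]
    refine ⟨hγx, by linarith [hdist.2], ?_⟩
    intro β hβ hγβ
    by_contra hc
    push_neg at hc
    have := hB β hβ hc
    linarith [hdist.2]
  choose δ hδpos hP using cover
  obtain ⟨t, htT, hcov⟩ := hTc.elim_nhds_subcover (fun x => Metric.ball x (δ x))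
    (fun x _ => Metric.ball_mem_nhds x (hδpos x))
  set S : ℝ → Set ℝ := fun γ => {y ∈ (↑t : Set ℝ) | γ ≤ y} with hS
  set g : ℝ → ℝ := fun γ => sInf (S γ) with hg
  have hSfin : ∀ γ, (S γ).Finite := fun γ => t.finite_toSet.subset fun y hy => hy.1
  have hne : ∀ γ ∈ closure Γ, ∃ x, x ∈ (↑t : Set ℝ) ∧ γ ≤ x ∧ x ≤ γ + α ∧
      ∀ β ∈ Γ'', γ ≤ β → x ≤ β := by
    intro γ hγ
    have h1 := hcov hγ
    simp only [Set.mem_iUnion] at h1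
    obtain ⟨x, hxt, hball⟩ := h1
    have hd : |γ - x| < δ x := by
      rw [Metric.mem_ball, Real.dist_eq] at hball
      exact hball
    obtain ⟨p1, p2, p3⟩ := hP x γ hγ hd
    exact ⟨x, Finset.mem_coe.mpr hxt, p1, p2, p3⟩
  have hgmem : ∀ γ ∈ closure Γ, g γ ∈ S γ := by
    intro γ hγ
    obtain ⟨x, hxt, hx1, _, _⟩ := hne γ hγ
    exact Set.Nonempty.csInf_mem ⟨x, hxt, hx1⟩ (hSfin γ)
  have hgle : ∀ γ x, x ∈ S γ → g γ ≤ x := fun γ x hx => csInf_le (hSfin γ).bddBelow hx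
  refine ⟨↑t, g, t.finite_toSet, fun x hx => htT x (Finset.mem_coe.mp hx), ?_, ?_, ?_, ?_, ?_⟩
  · exact fun x hx => (hgmem x hx).1
  · intro x hx
    have h1 := hgmem x hx
    exact le_antisymm (hgle _ _ ⟨h1.1, le_refl _⟩)
      (le_csInf ⟨g x, h1.1, le_refl _⟩ (fun b hb => hb.2))
  · intro γ hγ
    have hγT := subset_closure hγ
    obtain ⟨x, hxt, hx1, hx2, _⟩ := hne γ hγT
    exact ⟨(hgmem γ hγT).2, le_trans (hgle γ x ⟨hxt, hx1⟩) hx2⟩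
  · intro γ hγ γ' hγ' hle
    have h2 := hgmem γ' (subset_closure hγ')
    exact hgle γ (g γ') ⟨h2.1, le_trans hle h2.2⟩
  · intro β hβ γ hγ hγβ
    obtain ⟨x, hxt, hx1, _, hx3⟩ := hne γ (subset_closure hγ)
    exact le_trans (hgle γ x ⟨hxt, hx1⟩) (hx3 β hβ hγβ)
end

section
/- Let 𝒟 be a compact convex subset of ℝⁿ contained in the interior of the convex hull 𝒱 of points v₁,…,v_{n+1}. Then there exists ε > 0 such that for any points v₁',…,v_{n+1}' with ‖v_i - v_i'‖ < ε for all i, 𝒟 is contained in the convex hull of v₁',…,v_{n+1}'. -/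
/-!
Compactness gives `δ > 0` with `thickening δ D ⊆ conv v`. Moving every vertex by less than `δ`
keeps `conv v` inside `thickening δ (conv v')`, because the thickening of a convex set is convex.
So each `x ∈ D` has `ball x δ ⊆ thickening δ (conv v')`, and this cancellation forces
`x ∈ conv v'`: a functional with `f < t < f x` on the closed convex set `conv v'` is below
`t + ‖f‖ δ` on its `δ`-thickening, while on `ball x δ` it comes arbitrarily close to
`f x + ‖f‖ δ`.
-/

open Metric Set

variable {E : Type*} [NormedAddCommGroup E] [NormedSpace ℝ E]

theorem ContinuousLinearMap.exists_norm_lt_one_lt_apply (f : E →L[ℝ] ℝ) {r : ℝ}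
    (hr : r < ‖f‖) : ∃ w, ‖w‖ < 1 ∧ r < f w := by
  obtain ⟨w, hw, hrw⟩ := ContinuousLinearMap.exists_lt_apply_of_lt_opNorm f hr
  rcases lt_abs.1 (by rwa [← Real.norm_eq_abs]) with h | h
  · exact ⟨w, hw, h⟩
  · exact ⟨-w, by rwa [norm_neg], by rwa [map_neg]⟩

theorem convexHull_range_subset_thickening {ι : Type*} {v v' : ι → E} {δ : ℝ}
    (hv : ∀ i, ‖v i - v' i‖ < δ) :
    convexHull ℝ (range v) ⊆ thickening δ (convexHull ℝ (range v')) := by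
  refine convexHull_min ?_ ((convex_convexHull ℝ _).thickening δ)
  rintro _ ⟨i, rfl⟩
  refine mem_thickening_iff.2 ⟨v' i, subset_convexHull ℝ _ ⟨i, rfl⟩, ?_⟩
  rw [dist_eq_norm]
  exact hv i

theorem Convex.mem_of_ball_subset_thickening {C : Set E} (hC : Convex ℝ C) (hCc : IsClosed C)
    {x : E} {δ : ℝ} (hδ : 0 < δ) (h : ball x δ ⊆ Metric.thickening δ C) : x ∈ C := by
  by_contra hx
  obtain ⟨f, t, hfC, hfx⟩ := geometric_hahn_banach_closed_point hC hCc hx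
  have hthick : ∀ z ∈ Metric.thickening δ C, f z < t + ‖f‖ * δ := by
    intro z hz
    obtain ⟨c, hc, hzc⟩ := mem_thickening_iff.1 hz
    have hfzc : f (z - c) ≤ ‖f‖ * δ :=
      calc f (z - c) ≤ ‖f‖ * ‖z - c‖ := (le_abs_self _).trans (f.le_opNorm _)
        _ ≤ ‖f‖ * δ := by gcongr; rw [← dist_eq_norm]; exact hzc.le
    calc f z = f c + f (z - c) := by rw [map_sub, add_sub_cancel]
      _ < t + ‖f‖ * δ := add_lt_add_of_lt_of_le (hfC c hc) hfzc
  have hgap : 0 < (f x - t) / δ := div_pos (sub_pos.2 hfx) hδ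
  obtain ⟨w, hw, hfw⟩ := f.exists_norm_lt_one_lt_apply (sub_lt_self ‖f‖ hgap)
  have hy : x + δ • w ∈ ball x δ := by
    rw [mem_ball, dist_eq_norm, add_sub_cancel_left, norm_smul, Real.norm_of_nonneg hδ.le]
    exact mul_lt_of_lt_one_right hδ hw
  have hfy : f (x + δ • w) = f x + δ * f w := by rw [map_add, map_smul, smul_eq_mul]
  have hscale : δ * ((f x - t) / δ) = f x - t := mul_div_cancel₀ _ hδ.ne'
  have := hthick _ (h hy)
  nlinarith [mul_lt_mul_of_pos_left hfw hδ]

theorem IsCompact.exists_forall_subset_convexHull_of_subset_interior {ι : Type*} [Finite ι]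
    {K : Set E} (hK : IsCompact K) {v : ι → E} (hv : K ⊆ interior (convexHull ℝ (range v))) :
    ∃ ε > 0, ∀ v' : ι → E, (∀ i, ‖v i - v' i‖ < ε) →
      K ⊆ convexHull ℝ (range v') := by
  obtain ⟨δ, hδ, hthick⟩ := hK.exists_thickening_subset_open isOpen_interior hv
  refine ⟨δ, hδ, fun v' hv' x hx => ?_⟩
  refine (convex_convexHull ℝ _).mem_of_ball_subset_thickening
    ((finite_range v').isClosed_convexHull (𝕜 := ℝ)) hδ ?_
  calc ball x δ ⊆ thickening δ K := ball_subset_thickening hx δ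
    _ ⊆ convexHull ℝ (range v) := hthick.trans interior_subset
    _ ⊆ thickening δ (convexHull ℝ (range v')) := convexHull_range_subset_thickening hv'

theorem stmt_5_general (n : ℕ) (D : Set (EuclideanSpace ℝ (Fin n)))
    (hD : IsCompact D)
    (v : Fin (n + 1) → EuclideanSpace ℝ (Fin n))
    (hv : D ⊆ interior (convexHull ℝ (Set.range v))) :
    ∃ ε : ℝ, 0 < ε ∧ ∀ v' : Fin (n + 1) → EuclideanSpace ℝ (Fin n),
      (∀ i, ‖v i - v' i‖ < ε) → D ⊆ convexHull ℝ (Set.range v') :=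
  hD.exists_forall_subset_convexHull_of_subset_interior hv

/-- Lemma 6.4 (second part): if a compact convex set `𝒟 ⊆ ℝⁿ` lies in the interior of the
convex hull of `v₁,…,v_{n+1}`, then there is `ε > 0` such that `𝒟` lies in the convex hull
of any points `v'` with `‖v_i - v'_i‖ < ε` for all `i`. -/
theorem stmt_5 (n : ℕ) (D : Set (EuclideanSpace ℝ (Fin n)))
    (hD : IsCompact D) (hconv : Convex ℝ D)
    (v : Fin (n + 1) → EuclideanSpace ℝ (Fin n))
    (hv : D ⊆ interior (convexHull ℝ (Set.range v))) :
    ∃ ε : ℝ, 0 < ε ∧ ∀ v' : Fin (n + 1) → EuclideanSpace ℝ (Fin n),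
      (∀ i, ‖v i - v' i‖ < ε) → D ⊆ convexHull ℝ (Set.range v') :=
  stmt_5_general n D hD v hv
end

section
/- Let p₀, l, c be positive integers, ε₁ > 0, r₀ = (r₁,…,r_c) ∈ ℝ^c such that 1, r₁, …, r_c are linearly independent over ℚ, and e ∈ ℝ^c a nonzero vector. Then there exist a positive integer n₀ and a point r₀' ∈ ℝ^c such that: (1) p₀ divides n₀; (2) n₀·r₀' ∈ l·ℤ^c; (3) ‖r₀ - r₀'‖_∞ < ε₁/n₀; and (4) ‖(r₀ - r₀')/‖r₀ - r₀'‖_∞ - e/‖e‖_∞‖_∞ < ε₁. -/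
/-!
Kronecker's theorem by a positive-kernel argument. For `p ≥ 1` the function
`F n = ∏ᵢ cos (π (n xᵢ - tᵢ)) ^ (2p)` expands as a finite sum `∑ₐ cₐ 𝐞(-τₐ) 𝐞(βₐ) ^ n`. By the
independence of `1, x₁, …, x_c` only the constant frequency `βₐ₀ = 0` is an integer, so all other
terms have bounded partial sums, and `F` exceeds any `b` below the constant term
`(centralBinom p / 4 ^ p) ^ c ≥ (2p)⁻ᶜ` infinitely often. Taking `b = cos (π ε) ^ (2p)`, which decays
geometrically in `p`, forces every `n xᵢ - tᵢ` to within `ε` of an integer.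

Applied to `x = p₀ r` and the target `t = (ρ / l) • e / ‖e‖`, this gives `n` and `m ∈ ℤᶜ` such that
for `n₀ = p₀ l n` and `r' = l m / n₀` the vector `n₀ (r - r')` is close to `ρ • e / ‖e‖`; hence
`r - r'` is short and points nearly along `e`.
-/

open Real Finset Filter FourierTransform NormedSpace

lemma AddChar.map_sum_eq_prod {ι A M : Type*} [AddCommMonoid A] [CommMonoid M] (ψ : AddChar A M)
    (s : Finset ι) (f : ι → A) : ψ (∑ i ∈ s, f i) = ∏ i ∈ s, ψ (f i) :=
  map_prod ψ.toMonoidHom (fun i => Multiplicative.ofAdd (f i)) s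

lemma Circle.coe_prod {ι : Type*} (s : Finset ι) (f : ι → Circle) :
    ((∏ i ∈ s, f i : Circle) : ℂ) = ∏ i ∈ s, (f i : ℂ) :=
  map_prod coeHom f s

lemma Real.fourierChar_eq_one_iff {x : ℝ} : 𝐞 x = 1 ↔ ∃ k : ℤ, x = k := by
  rw [fourierChar_apply', Circle.exp_eq_one]
  refine exists_congr fun k => ⟨fun h => ?_, fun h => by rw [h]; ring⟩
  nlinarith [pi_pos]

lemma Circle.norm_sum_Ico_pow_le {z : Circle} (hz : z ≠ 1) (M N : ℕ) :
    ‖∑ n ∈ Ico M (M + N), (z : ℂ) ^ n‖ ≤ 2 / ‖(z : ℂ) - 1‖ := by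
  have hz' : (z : ℂ) ≠ 1 := by rwa [Ne, Circle.coe_eq_one]
  rw [geom_sum_Ico hz' (Nat.le_add_right M N), norm_div]
  gcongr
  calc ‖(z : ℂ) ^ (M + N) - (z : ℂ) ^ M‖ ≤ ‖(z : ℂ) ^ (M + N)‖ + ‖(z : ℂ) ^ M‖ := norm_sub_le _ _
    _ = 2 := by simp only [norm_pow, Circle.norm_coe, one_pow]; norm_num

lemma frequently_lt_of_le_sum_Ico {f : ℕ → ℝ} {b c₀ C : ℝ} (hb : b < c₀)
    (hf : ∀ M N : ℕ, N * c₀ - C ≤ ∑ n ∈ Ico M (M + N), f n) : ∃ᶠ n in atTop, b < f n := by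
  rw [frequently_atTop]
  intro M
  by_contra! hle
  obtain ⟨N, hN⟩ := exists_nat_gt (C / (c₀ - b))
  have hsum : ∑ n ∈ Ico M (M + N), f n ≤ N * b := by
    calc ∑ n ∈ Ico M (M + N), f n ≤ ∑ _n ∈ Ico M (M + N), b :=
          sum_le_sum fun n hn => hle n (mem_Ico.mp hn).1
      _ = N * b := by simp
  have := hf M N
  rw [div_lt_iff₀ (sub_pos.mpr hb)] at hN
  nlinarith

lemma frequently_lt_of_eq_add_sum_pow {α : Type*} {s : Finset α} {z : α → Circle}
    (hz : ∀ a ∈ s, z a ≠ 1) (w : α → ℂ) {f : ℕ → ℝ} {b c₀ : ℝ}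
    (hf : ∀ n, (f n : ℂ) = c₀ + ∑ a ∈ s, w a * (z a : ℂ) ^ n) (hb : b < c₀) :
    ∃ᶠ n in atTop, b < f n := by
  refine frequently_lt_of_le_sum_Ico (C := ∑ a ∈ s, ‖w a‖ * (2 / ‖(z a : ℂ) - 1‖)) hb
    fun M N => ?_
  set R : ℂ := ∑ a ∈ s, w a * ∑ n ∈ Ico M (M + N), (z a : ℂ) ^ n
  have hsum : ((∑ n ∈ Ico M (M + N), f n : ℝ) : ℂ) = (N * c₀ : ℝ) + R := by
    push_cast
    simp only [hf, sum_add_distrib, sum_const, Nat.card_Ico, add_tsub_cancel_left, nsmul_eq_mul,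
      R, mul_sum]
    rw [sum_comm]
  have hR : ‖R‖ ≤ ∑ a ∈ s, ‖w a‖ * (2 / ‖(z a : ℂ) - 1‖) :=
    (norm_sum_le _ _).trans <| sum_le_sum fun a ha => by
      rw [norm_mul]
      gcongr
      exact Circle.norm_sum_Ico_pow_le (hz a ha) M N
  have hre := congrArg Complex.re hsum
  simp only [Complex.ofReal_re, Complex.add_re] at hre
  rw [hre]
  linarith [neg_abs_le R.re, Complex.abs_re_le_norm R]

lemma Real.cos_pi_mul_pow_eq_sum (p : ℕ) (y : ℝ) :
    ((cos (π * y) ^ (2 * p) : ℝ) : ℂ) =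
      ∑ j ∈ range (2 * p + 1), (((2 * p).choose j / 4 ^ p : ℝ) : ℂ) * 𝐞 ((j - p) * y) := by
  have hcos : ((cos (π * y) : ℝ) : ℂ) = (𝐞 (y / 2) + 𝐞 (-(y / 2))) / 2 := by
    simp only [fourierChar_apply, Complex.ofReal_cos, Complex.cos]
    push_cast
    ring_nf
  rw [Complex.ofReal_pow, hcos, div_pow, add_pow, sum_div]
  refine sum_congr rfl fun j hj => ?_
  have hj : j ≤ 2 * p := Nat.lt_succ_iff.mp (mem_range.mp hj)
  have hexp : (𝐞 (y / 2) : ℂ) ^ j * (𝐞 (-(y / 2)) : ℂ) ^ (2 * p - j) = 𝐞 ((j - p) * y) := by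
    rw [← Circle.coe_pow, ← Circle.coe_pow, ← Circle.coe_mul, ← AddChar.map_nsmul_eq_pow,
      ← AddChar.map_nsmul_eq_pow, ← AddChar.map_add_eq_mul, nsmul_eq_mul, nsmul_eq_mul,
      Nat.cast_sub hj]
    congr 2
    push_cast
    ring
  rw [hexp, pow_mul]
  push_cast
  ring

lemma Real.prod_cos_pi_mul_pow_eq_sum {ι : Type*} [Fintype ι] [DecidableEq ι] (p : ℕ)
    (y : ι → ℝ) :
    ((∏ i, cos (π * y i) ^ (2 * p) : ℝ) : ℂ) =
      ∑ a ∈ Fintype.piFinset fun _ => range (2 * p + 1),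
        ((∏ i, ((2 * p).choose (a i) / 4 ^ p : ℝ)) : ℂ) * 𝐞 (∑ i, ((a i : ℝ) - p) * y i) := by
  simp only [Complex.ofReal_prod, cos_pi_mul_pow_eq_sum, prod_univ_sum, AddChar.map_sum_eq_prod,
    prod_mul_distrib]
  refine sum_congr rfl fun a _ => ?_
  rw [Circle.coe_prod]

lemma Finset.prod_le_of_mem_of_le_one {ι : Type*} {s : Finset ι} {f : ι → ℝ}
    (h0 : ∀ i ∈ s, 0 ≤ f i) (h1 : ∀ i ∈ s, f i ≤ 1) {i : ι} (hi : i ∈ s) :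
    ∏ j ∈ s, f j ≤ f i := by
  classical
  rw [← mul_prod_erase s f hi]
  exact mul_le_of_le_one_right (h0 i hi)
    (prod_le_one (fun j hj => h0 j (mem_of_mem_erase hj)) fun j hj => h1 j (mem_of_mem_erase hj))

lemma frequently_lt_prod_cos_pi_mul_pow {ι : Type*} [Fintype ι] {x : ι → ℝ}
    (hx : ∀ a : ι → ℤ, (∃ m : ℤ, ∑ i, a i * x i = m) → a = 0) (t : ι → ℝ) (p : ℕ) {b : ℝ}
    (hb : b < (p.centralBinom / 4 ^ p : ℝ) ^ Fintype.card ι) :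
    ∃ᶠ n : ℕ in atTop, b < ∏ i, cos (π * (n * x i - t i)) ^ (2 * p) := by
  classical
  set A := Fintype.piFinset fun _ : ι => range (2 * p + 1)
  set a₀ : ι → ℕ := fun _ => p
  have ha₀ : a₀ ∈ A :=
    Fintype.mem_piFinset.mpr fun _ => mem_range.mpr (by show p < 2 * p + 1; omega)
  set coef : (ι → ℕ) → ℝ := fun a => ∏ i, ((2 * p).choose (a i) / 4 ^ p : ℝ)
  set β : (ι → ℕ) → ℝ := fun a => ∑ i, ((a i : ℝ) - p) * x i
  set τ : (ι → ℕ) → ℝ := fun a => ∑ i, ((a i : ℝ) - p) * t i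
  have hexpand : ∀ n : ℕ, ((∏ i, cos (π * (n * x i - t i)) ^ (2 * p) : ℝ) : ℂ) =
      coef a₀ + ∑ a ∈ A.erase a₀, ((coef a : ℂ) * 𝐞 (-τ a)) * (𝐞 (β a) : ℂ) ^ n := by
    intro n
    rw [prod_cos_pi_mul_pow_eq_sum, ← add_sum_erase _ _ ha₀]
    congr 1
    · simp [a₀, coef]
    · refine sum_congr rfl fun a _ => ?_
      have : ∑ i, ((a i : ℝ) - p) * (n * x i - t i) = n • β a + -τ a := by
        simp only [β, τ, nsmul_eq_mul, mul_sum, ← sum_neg_distrib, ← sum_add_distrib]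
        exact sum_congr rfl fun i _ => by ring
      rw [this, AddChar.map_add_eq_mul, AddChar.map_nsmul_eq_pow, Circle.coe_mul, Circle.coe_pow]
      simp only [coef]
      push_cast
      ring
  have hβ : ∀ a ∈ A.erase a₀, 𝐞 (β a) ≠ 1 := by
    intro a ha h
    obtain ⟨k, hk⟩ := fourierChar_eq_one_iff.mp h
    have := hx (fun i => (a i : ℤ) - p) ⟨k, by rw [← hk]; push_cast; rfl⟩
    exact (mem_erase.mp ha).1 (funext fun i => by simpa [sub_eq_zero] using congrFun this i)
  have hconst : coef a₀ = (p.centralBinom / 4 ^ p : ℝ) ^ Fintype.card ι := by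
    simp only [coef, a₀, prod_const, card_univ, Nat.centralBinom_eq_two_mul_choose]
  exact frequently_lt_of_eq_add_sum_pow hβ _ hexpand (hconst ▸ hb)

lemma Nat.inv_two_mul_le_centralBinom_div_four_pow {p : ℕ} (hp : 0 < p) :
    (2 * p : ℝ)⁻¹ ≤ p.centralBinom / 4 ^ p := by
  have h := Nat.four_pow_le_two_mul_self_mul_centralBinom p hp
  rw [inv_eq_one_div, div_le_div_iff₀ (by positivity) (by positivity)]
  exact_mod_cast (one_mul (4 ^ p)).trans_le (h.trans_eq (by ring))

lemma exists_pow_lt_inv_two_mul_pow {r : ℝ} (hr0 : 0 ≤ r) (hr : r < 1) (k : ℕ) :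
    ∃ p : ℕ, 0 < p ∧ r ^ p < (2 * p : ℝ)⁻¹ ^ k := by
  have hlim : Tendsto (fun p : ℕ => (2 : ℝ) ^ k * ((p : ℝ) ^ k * r ^ p)) atTop (nhds 0) := by
    simpa using (tendsto_pow_const_mul_const_pow_of_abs_lt_one k
      (by rwa [abs_of_nonneg hr0])).const_mul ((2 : ℝ) ^ k)
  obtain ⟨p, hp1, hp⟩ := ((hlim.eventually_lt_const one_pos).and (eventually_gt_atTop 0)).exists
  refine ⟨p, hp, ?_⟩
  have hp' : (0 : ℝ) < p := by exact_mod_cast hp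
  rw [inv_pow, ← one_div, lt_div_iff₀ (by positivity), mul_pow]
  linarith

lemma abs_sub_round_lt_of_cos_lt_abs_cos {d ε : ℝ} (hε : 0 ≤ ε)
    (h : cos (π * ε) < |cos (π * d)|) : |d - round d| < ε := by
  set u := d - round d
  have hu : |u| ≤ 1 / 2 := abs_sub_round d
  have hcos : |cos (π * d)| = cos (π * |u|) := by
    have : π * d = π * u + round d * π := by simp only [u]; ring
    rw [this, cos_add_int_mul_pi, abs_mul, abs_zpow, abs_neg, abs_one, one_zpow, one_mul,
      ← cos_abs, abs_mul, abs_of_pos pi_pos, abs_of_nonneg]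
    exact cos_nonneg_of_mem_Icc ⟨by nlinarith [pi_pos, abs_nonneg u], by nlinarith [pi_pos]⟩
  by_contra! hεu
  have : cos (π * |u|) ≤ cos (π * ε) :=
    cos_le_cos_of_nonneg_of_le_pi (by positivity) (by nlinarith [pi_pos]) (by gcongr)
  linarith

theorem frequently_exists_int_abs_sub_lt {ι : Type*} [Fintype ι] {x : ι → ℝ}
    (hx : ∀ a : ι → ℤ, (∃ m : ℤ, ∑ i, a i * x i = m) → a = 0) (t : ι → ℝ) {ε : ℝ}
    (hε : 0 < ε) : ∃ᶠ n : ℕ in atTop, ∃ m : ι → ℤ, ∀ i, |n * x i - t i - m i| < ε := by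
  wlog hε2 : ε ≤ 1 / 2 generalizing ε
  · exact (this (by norm_num) le_rfl).mono fun n ⟨m, hm⟩ =>
      ⟨m, fun i => (hm i).trans (by linarith)⟩
  have hcos0 : 0 ≤ cos (π * ε) :=
    cos_nonneg_of_mem_Icc ⟨by nlinarith [pi_pos], by nlinarith [pi_pos]⟩
  have hcos1 : cos (π * ε) < 1 := by
    simpa using cos_lt_cos_of_nonneg_of_le_pi le_rfl (by nlinarith [pi_pos])
      (by positivity : 0 < π * ε)
  obtain ⟨p, hp, hpow⟩ :=
    exists_pow_lt_inv_two_mul_pow (sq_nonneg (cos (π * ε))) (by nlinarith) (Fintype.card ι)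
  have hb : cos (π * ε) ^ (2 * p) < (p.centralBinom / 4 ^ p : ℝ) ^ Fintype.card ι := by
    rw [pow_mul]
    exact hpow.trans_le (by gcongr; exact Nat.inv_two_mul_le_centralBinom_div_four_pow hp)
  refine (frequently_lt_prod_cos_pi_mul_pow hx t p hb).mono fun n hn =>
    ⟨fun i => round (n * x i - t i), fun i => ?_⟩
  refine abs_sub_round_lt_of_cos_lt_abs_cos hε.le
    (lt_of_pow_lt_pow_left₀ (2 * p) (abs_nonneg _) ?_)
  rw [(even_two_mul p).pow_abs]
  exact hn.trans_le (prod_le_of_mem_of_le_one (fun j _ => (even_two_mul p).pow_nonneg _)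
    (fun j _ => by rw [pow_mul]; exact pow_le_one₀ (sq_nonneg _) (cos_sq_le_one _)) (mem_univ i))

lemma NormedSpace.norm_normalize_sub_normalize_le {V : Type*} [NormedAddCommGroup V]
    [NormedSpace ℝ V] (v : V) {w : V} (hw : w ≠ 0) :
    ‖normalize v - normalize w‖ ≤ 2 * ‖v - w‖ / ‖w‖ := by
  have hw' : 0 < ‖w‖ := norm_pos_iff.mpr hw
  have hsplit : normalize v - normalize w =
      ‖w‖⁻¹ • ((‖w‖ - ‖v‖) • normalize v + (v - w)) := by
    rw [sub_smul, norm_smul_normalize, smul_add, smul_sub, smul_sub, smul_smul,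
      inv_mul_cancel₀ hw'.ne', one_smul]
    simp only [normalize]
    abel
  have hnv : ‖normalize v‖ ≤ 1 := by
    rcases eq_or_ne v 0 with rfl | hv
    · simp
    · rw [norm_normalize_eq_one_iff.mpr hv]
  rw [hsplit, norm_smul, norm_inv, norm_norm, inv_mul_eq_div]
  gcongr
  calc ‖(‖w‖ - ‖v‖) • normalize v + (v - w)‖
      ≤ |‖w‖ - ‖v‖| * 1 + ‖v - w‖ := by
        grw [norm_add_le, norm_smul, Real.norm_eq_abs, hnv]
    _ ≤ 2 * ‖v - w‖ := by
        linarith [abs_norm_sub_norm_le w v, norm_sub_rev v w]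

/-- `Fin c → ℝ` carries the sup-norm `‖·‖_∞`; `hind` is the linear independence of
`1, r₁, …, r_c` over `ℚ`. -/
theorem stmt_6_general (p₀ l c : ℕ) (hp₀ : 0 < p₀) (hl : 0 < l)
    (ε₁ : ℝ) (hε₁ : 0 < ε₁) (r : Fin c → ℝ)
    (hind : ∀ (q₀ : ℚ) (q : Fin c → ℚ),
      (q₀ : ℝ) + ∑ i, (q i : ℝ) * r i = 0 → q₀ = 0 ∧ ∀ i, q i = 0)
    (e : Fin c → ℝ) (he : e ≠ 0) :
    ∃ (n₀ : ℕ) (r' : Fin c → ℝ), 0 < n₀ ∧ p₀ ∣ n₀ ∧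
      (∀ i, ∃ m : ℤ, (n₀ : ℝ) * r' i = (l : ℝ) * m) ∧
      ‖r - r'‖ < ε₁ / n₀ ∧
      ‖(‖r - r'‖⁻¹ • (r - r')) - (‖e‖⁻¹ • e)‖ < ε₁ := by
  set ρ := ε₁ / 2
  set η := ρ * min 1 ε₁ / 2
  have hρ : 0 < ρ := by positivity
  have hηρ : η ≤ ρ := by
    have := min_le_left 1 ε₁
    simp only [η]; nlinarith
  have hηε : 2 * η / ρ ≤ ε₁ := by
    simp only [η]; field_simp; exact min_le_right 1 ε₁
  set w : Fin c → ℝ := ρ • normalize e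
  have hw : ‖w‖ = ρ := by
    rw [norm_smul, norm_normalize_eq_one_iff.mpr he, mul_one, Real.norm_of_nonneg hρ.le]
  have hx : ∀ a : Fin c → ℤ, (∃ m : ℤ, ∑ i, a i * (p₀ * r i) = m) → a = 0 := by
    rintro a ⟨m, hm⟩
    have := (hind (-m) (fun i => a i * p₀) (by push_cast; rw [← hm]; simp [mul_assoc])).2
    funext i
    simpa [hp₀.ne'] using this i
  have hlR : (0 : ℝ) < l := by exact_mod_cast hl
  obtain ⟨n, ⟨m, hm⟩, hn⟩ := ((frequently_exists_int_abs_sub_lt hx (fun i => w i / l)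
    (by positivity : 0 < η / l)).and_eventually (eventually_gt_atTop 0)).exists
  set n₀ := p₀ * l * n
  have hn₀ : (0 : ℝ) < n₀ := by positivity
  set r' : Fin c → ℝ := fun i => l * m i / n₀
  set v : Fin c → ℝ := (n₀ : ℝ) • (r - r')
  have hvw : ‖v - w‖ < η := by
    refine (pi_norm_lt_iff (by positivity)).mpr fun i => ?_
    have : v i - w i = l * (n * (p₀ * r i) - w i / l - m i) := by
      simp only [v, r', n₀, Pi.smul_apply, Pi.sub_apply, smul_eq_mul]
      push_cast
      field_simp
      ring
    rw [Pi.sub_apply, this, Real.norm_eq_abs, abs_mul, abs_of_pos hlR, ← lt_div_iff₀' hlR]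
    exact hm i
  refine ⟨n₀, r', by positivity, Dvd.intro _ (mul_assoc _ _ _).symm,
    fun i => ⟨m i, by simp only [r']; field_simp⟩, ?_, ?_⟩
  · have hv : ‖v‖ < ε₁ := by
      calc ‖v‖ ≤ ‖w‖ + ‖v - w‖ := norm_le_norm_add_norm_sub' v w
        _ < ρ + ρ := by rw [hw]; gcongr; exact hvw.trans_le hηρ
        _ = ε₁ := by ring
    rwa [lt_div_iff₀ hn₀, mul_comm, ← Real.norm_of_nonneg hn₀.le, ← norm_smul]
  · change ‖normalize (r - r') - normalize e‖ < ε₁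
    rw [← normalize_smul_of_pos hn₀ (r - r'), ← normalize_normalize e,
      ← normalize_smul_of_pos hρ (normalize e)]
    calc _ ≤ 2 * ‖v - w‖ / ‖w‖ :=
          norm_normalize_sub_normalize_le v (norm_pos_iff.mp (hw ▸ hρ))
      _ < 2 * η / ρ := by rw [hw]; gcongr
      _ ≤ ε₁ := hηε

/-- Lemma 6.1 (Diophantine approximation via Kronecker's theorem). Here `Fin c → ℝ` carries
the sup-norm `‖·‖_∞`. The hypothesis `hind` says that `1, r₁, …, r_c` are linearly
independent over `ℚ`. -/
theorem stmt_6 (p₀ l c : ℕ) (hp₀ : 0 < p₀) (hl : 0 < l) (hc : 0 < c)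
    (ε₁ : ℝ) (hε₁ : 0 < ε₁) (r : Fin c → ℝ)
    (hind : ∀ (q₀ : ℚ) (q : Fin c → ℚ),
      (q₀ : ℝ) + ∑ i, (q i : ℝ) * r i = 0 → q₀ = 0 ∧ ∀ i, q i = 0)
    (e : Fin c → ℝ) (he : e ≠ 0) :
    ∃ (n₀ : ℕ) (r' : Fin c → ℝ), 0 < n₀ ∧ p₀ ∣ n₀ ∧
      (∀ i, ∃ m : ℤ, (n₀ : ℝ) * r' i = (l : ℝ) * m) ∧
      ‖r - r'‖ < ε₁ / n₀ ∧
      ‖(‖r - r'‖⁻¹ • (r - r')) - (‖e‖⁻¹ • e)‖ < ε₁ :=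
  stmt_6_general p₀ l c hp₀ hl ε₁ hε₁ r hind e he
end

section
/- Let Γ be a set of non-negative real numbers. The following are equivalent: (1) for every finite subset Γ₀ ⊆ Γ there exist real numbers r₀ = 1, r₁, …, r_c linearly independent over ℚ with Γ₀ ⊆ Span_{ℚ≥0}({r₀, r₁, …, r_c}); (2) Span_{ℚ≥0}(Γ \ ℚ) ∩ (ℚ \ {0}) = ∅. -/
open scoped BigOperators

/-- `Span_{ℚ≥0}(S)`: all finite non-negative rational linear combinations of elements of `S`
(including the empty combination `0`). -/
def qSpan (S : Set ℝ) : Set ℝ :=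
  {x | ∃ (n : ℕ) (q : Fin n → ℚ) (v : Fin n → ℝ),
    (∀ i, 0 ≤ q i) ∧ (∀ i, v i ∈ S) ∧ x = ∑ i, (q i : ℝ) * v i}

/-- The rational numbers as a subset of `ℝ`. -/
def ratSet : Set ℝ := Set.range (fun q : ℚ => (q : ℝ))

section Helpers
open Finset Submodule


private def qdot {d : ℕ} (f v : Fin d → ℚ) : ℚ := ∑ j, f j * v j

private lemma qdot_self_pos {d : ℕ} {x : Fin d → ℚ} (hx : x ≠ 0) : 0 < qdot x x := by
  have hex : ∃ j, x j ≠ 0 := by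
    by_contra h; push_neg at h; exact hx (funext h)
  obtain ⟨j, hj⟩ := hex
  exact Finset.sum_pos' (fun i _ => mul_self_nonneg _)
    ⟨j, Finset.mem_univ j, mul_self_pos.mpr hj⟩

private lemma qdot_comb_left {d : ℕ} (a b : ℚ) (f g x : Fin d → ℚ) :
    qdot (a • f - b • g) x = a * qdot f x - b * qdot g x := by
  simp [qdot, sub_mul, Finset.sum_sub_distrib, Finset.mul_sum, mul_assoc]

private lemma qdot_comb_right {d : ℕ} (a b : ℚ) (f x y : Fin d → ℚ) :
    qdot f (a • x - b • y) = a * qdot f x - b * qdot f y := by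
  simp [qdot, mul_sub, Finset.sum_sub_distrib, Finset.mul_sum, mul_assoc,
    mul_comm, mul_left_comm]

private lemma qdot_add_smul {d : ℕ} (x y z : Fin d → ℚ) (a : ℚ) :
    qdot (x + a • y) z = qdot x z + a * qdot y z := by
  simp [qdot, add_mul, Finset.sum_add_distrib, Finset.mul_sum, mul_assoc]

private lemma gordan {d : ℕ} : ∀ (m : ℕ) (u : Fin m → Fin d → ℚ),
    (∀ a : Fin m → ℚ, (∀ i, 0 ≤ a i) → ∑ i, a i • u i = 0 → ∀ i, a i = 0) →
    ∃ f : Fin d → ℚ, ∀ i, 0 < qdot f (u i) := by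
  intro m
  induction m with
  | zero => exact fun u _ => ⟨0, fun i => i.elim0⟩
  | succ m ih =>
    intro u hu
    set u' : Fin m → Fin d → ℚ := fun i => u i.castSucc with hu'def
    have hu' : ∀ a : Fin m → ℚ, (∀ i, 0 ≤ a i) → ∑ i, a i • u' i = 0 → ∀ i, a i = 0 := by
      intro a ha hsum i
      have h0 : ∀ k, (Fin.snoc a 0 : Fin (m+1) → ℚ) k = 0 := by
        apply hu
        · intro k
          refine Fin.lastCases ?_ ?_ k
          · simp
          · intro i; simpa using ha i
        · rw [Fin.sum_univ_castSucc]
          simpa using hsum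
      have := h0 i.castSucc
      simpa using this
    obtain ⟨f, hf⟩ := ih u' hu'
    by_cases hμ : 0 < qdot f (u (Fin.last m))
    · refine ⟨f, fun i => ?_⟩
      refine Fin.lastCases hμ (fun i => hf i) i
    push_neg at hμ
    have hum0 : u (Fin.last m) ≠ 0 := by
      intro h
      have key : ∑ i, (fun i => if i = Fin.last m then (1:ℚ) else 0) i • u i = 0 := by
        simp only [ite_smul, one_smul, zero_smul]
        rw [Finset.sum_ite_eq' Finset.univ (Fin.last m) u]
        simp [h]
      have := hu (fun i => if i = Fin.last m then (1:ℚ) else 0)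
        (fun i => by by_cases hi : i = Fin.last m <;> simp [hi]) key (Fin.last m)
      simp at this
    set v : Fin m → Fin d → ℚ :=
      fun i => qdot f (u' i) • u (Fin.last m) - qdot f (u (Fin.last m)) • u' i with hvdef
    have hv : ∀ a : Fin m → ℚ, (∀ i, 0 ≤ a i) → ∑ i, a i • v i = 0 → ∀ i, a i = 0 := by
      intro a ha hsum
      have key : ∑ i, a i • v i =
          (∑ i, ((-(qdot f (u (Fin.last m)))) * a i) • u' i)
            + (∑ i, a i * qdot f (u' i)) • u (Fin.last m) := by
        rw [Finset.sum_smul, ← Finset.sum_add_distrib]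
        refine Finset.sum_congr rfl fun i _ => ?_
        simp only [hvdef]
        module
      have hA0 : ∀ k, (Fin.snoc (fun i => (-(qdot f (u (Fin.last m)))) * a i)
          (∑ i, a i * qdot f (u' i)) : Fin (m+1) → ℚ) k = 0 := by
        apply hu
        · intro k
          refine Fin.lastCases ?_ ?_ k
          · simp only [Fin.snoc_last]
            exact Finset.sum_nonneg fun i _ => mul_nonneg (ha i) (hf i).le
          · intro i
            simp only [Fin.snoc_castSucc]
            exact mul_nonneg (neg_nonneg.mpr hμ) (ha i)
        · rw [Fin.sum_univ_castSucc]
          simp only [Fin.snoc_castSucc, Fin.snoc_last]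
          rw [← key]
          exact hsum
      intro i
      have hlast := hA0 (Fin.last m)
      simp only [Fin.snoc_last] at hlast
      have := (Finset.sum_eq_zero_iff_of_nonneg
        (fun i _ => mul_nonneg (ha i) (hf i).le)).mp hlast i (Finset.mem_univ i)
      exact (mul_eq_zero.mp this).resolve_right (ne_of_gt (hf i))
    obtain ⟨g, hg⟩ := ih v hv
    set h : Fin d → ℚ := qdot g (u (Fin.last m)) • f - qdot f (u (Fin.last m)) • g with hhdef
    have hh1 : ∀ i, 0 < qdot h (u' i) := by
      intro i
      have : qdot h (u' i) = qdot g (v i) := by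
        rw [hhdef, hvdef, qdot_comb_left, qdot_comb_right]
        ring
      rw [this]; exact hg i
    have hh2 : qdot h (u (Fin.last m)) = 0 := by
      rw [hhdef, qdot_comb_left]; ring
    set lam : ℚ := 1 + ∑ i, |qdot (u (Fin.last m)) (u' i)| / qdot h (u' i) with hlamdef
    have hlam : ∀ i, 1 + |qdot (u (Fin.last m)) (u' i)| / qdot h (u' i) ≤ lam := by
      intro i
      have : |qdot (u (Fin.last m)) (u' i)| / qdot h (u' i)
          ≤ ∑ i, |qdot (u (Fin.last m)) (u' i)| / qdot h (u' i) :=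
        Finset.single_le_sum (fun i _ => div_nonneg (abs_nonneg _) (hh1 i).le)
          (Finset.mem_univ i)
      rw [hlamdef]; linarith
    refine ⟨u (Fin.last m) + lam • h, fun i => ?_⟩
    refine Fin.lastCases ?_ ?_ i
    · rw [qdot_add_smul, hh2]
      simpa using qdot_self_pos hum0
    · intro i
      rw [qdot_add_smul]
      set X := qdot (u (Fin.last m)) (u' i) with hX
      set H := qdot h (u' i) with hH
      have hHpos : 0 < H := hh1 i
      have h1 : (1 + |X| / H) * H ≤ lam * H :=
        mul_le_mul_of_nonneg_right (hlam i) hHpos.le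
      have h2 : (1 + |X| / H) * H = H + |X| := by
        field_simp
      have h3 : H + |X| ≤ lam * H := by rw [← h2]; exact h1
      have h4 := neg_abs_le X
      linarith


set_option maxHeartbeats 2000000 in
private lemma simplexCone {V : Type*} [AddCommGroup V] [Module ℚ V] {m : ℕ}
    (u : Fin m → V) (f : V →ₗ[ℚ] ℚ) (hf : ∀ i, 0 < f (u i)) :
    ∃ (k : ℕ) (s : Fin k → V) (c : Fin m → Fin k → ℚ),
      LinearIndependent ℚ s ∧ (∀ i j, 0 ≤ c i j) ∧ ∀ i, u i = ∑ j, c i j • s j := by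
  rcases Nat.eq_zero_or_pos m with hm | hm
  · subst hm
    exact ⟨0, fun j => j.elim0, fun i => i.elim0, linearIndependent_empty_type,
      fun i => i.elim0, fun i => i.elim0⟩
  have hfne : ∀ i, f (u i) ≠ 0 := fun i => (hf i).ne'
  set i₀ : Fin m := ⟨0, hm⟩ with hi₀
  set z : V := (f (u i₀))⁻¹ • u i₀ with hzdef
  have hz : f z = 1 := by
    rw [hzdef, map_smul, smul_eq_mul, inv_mul_cancel₀ (hfne i₀)]
  set η : Fin m → V := fun i => (f (u i))⁻¹ • u i - z with hηdef
  have hη : ∀ i, f (η i) = 0 := by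
    intro i
    rw [hηdef]
    simp only [map_sub, map_smul, smul_eq_mul, hz, inv_mul_cancel₀ (hfne i)]
    ring
  have huη : ∀ i, u i = f (u i) • (z + η i) := by
    intro i
    rw [hηdef]
    simp only [add_sub_cancel]
    rw [smul_smul, mul_inv_cancel₀ (hfne i), one_smul]
  set W := Submodule.span ℚ (Set.range η) with hWdef
  have hWf : W ≤ LinearMap.ker f := by
    rw [hWdef, Submodule.span_le]
    rintro x ⟨i, rfl⟩
    exact hη i
  haveI : FiniteDimensional ℚ W := FiniteDimensional.span_of_finite ℚ (Set.finite_range η)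
  set d' := Module.finrank ℚ W with hd'
  set b := Module.finBasis ℚ W with hb
  set ηW : Fin m → W := fun i => ⟨η i, Submodule.subset_span (Set.mem_range_self i)⟩ with hηW
  set γ : Fin m → Fin d' → ℚ := fun i => b.equivFun (ηW i) with hγdef
  set kk : Fin d' → V := fun j => ((b j : W) : V) with hkk
  have hγ : ∀ i, η i = ∑ j, γ i j • kk j := by
    intro i
    have h1 : ∑ j, γ i j • b j = ηW i := b.sum_equivFun (ηW i)
    have := congrArg (Subtype.val) h1
    simpa [hkk, AddSubmonoidClass.coe_finset_sum] using this.symm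
  have hkf : ∀ j, f (kk j) = 0 := fun j => hWf (b j).2
  have hkind : LinearIndependent ℚ kk :=
    b.linearIndependent.map' W.subtype (Submodule.ker_subtype W)
  have hzW : z ∉ Submodule.span ℚ (Set.range kk) := by
    intro hmem
    have hsp : Submodule.span ℚ (Set.range kk) ≤ LinearMap.ker f := by
      rw [Submodule.span_le]
      rintro x ⟨j, rfl⟩
      exact hkf j
    have := hsp hmem
    rw [LinearMap.mem_ker, hz] at this
    exact one_ne_zero this
  have hcons : LinearIndependent ℚ (Fin.cons z kk : Fin (d' + 1) → V) :=
    linearIndependent_fin_cons.mpr ⟨hkind, hzW⟩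
  set R : ℚ := 1 + ∑ i, ∑ j, |γ i j| with hRdef
  have hR1 : 1 ≤ R := by
    rw [hRdef]
    have : (0:ℚ) ≤ ∑ i, ∑ j, |γ i j| :=
      Finset.sum_nonneg fun i _ => Finset.sum_nonneg fun j _ => abs_nonneg _
    linarith
  have hRγsum : ∀ i, ∑ j, |γ i j| ≤ R - 1 := by
    intro i
    have : ∑ j, |γ i j| ≤ ∑ i, ∑ j, |γ i j| :=
      Finset.single_le_sum (f := fun i => ∑ j, |γ i j|)
        (fun i _ => Finset.sum_nonneg fun j _ => abs_nonneg _) (Finset.mem_univ i)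
    rw [hRdef]; linarith
  have hRγ : ∀ i j, |γ i j| ≤ R - 1 := by
    intro i j
    have : |γ i j| ≤ ∑ j, |γ i j| :=
      Finset.single_le_sum (f := fun j => |γ i j|) (fun j _ => abs_nonneg _) (Finset.mem_univ j)
    exact this.trans (hRγsum i)
  set L : ℚ := (d' + 1) * R with hLdef
  have hL0 : 0 < L := by
    rw [hLdef]
    have : (0:ℚ) < d' + 1 := by positivity
    nlinarith
  set K : V := ∑ j, kk j with hK
  set V0 : V := z - R • K with hV0
  set s : Fin (d' + 1) → V := Fin.cons V0 (fun j => V0 + L • kk j) with hs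
  set c : Fin m → Fin (d' + 1) → ℚ :=
    fun i => Fin.cons (f (u i) * (1 - (∑ j, (γ i j + R)) / L))
      (fun j => f (u i) * ((γ i j + R) / L)) with hc
  -- expansion lemma
  have expand : ∀ e : Fin (d' + 1) → ℚ,
      ∑ jj, e jj • s jj = (∑ jj, e jj) • z
        + ∑ j, (L * e j.succ - R * (∑ jj, e jj)) • kk j := by
    intro e
    have h1 : ∑ j : Fin d', e j.succ • (V0 + L • kk j)
        = (∑ j : Fin d', e j.succ) • V0 + ∑ j : Fin d', (e j.succ * L) • kk j := by
      rw [Finset.sum_smul, ← Finset.sum_add_distrib]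
      refine Finset.sum_congr rfl fun j _ => ?_
      rw [smul_add, smul_smul]
    have hE : ∑ jj, e jj = e 0 + ∑ j : Fin d', e j.succ := Fin.sum_univ_succ e
    have h2 : (∑ jj, e jj) • V0
        = (∑ jj, e jj) • z - ∑ j : Fin d', ((∑ jj, e jj) * R) • kk j := by
      rw [hV0, smul_sub]
      congr 1
      rw [hK, Finset.smul_sum, Finset.smul_sum]
      exact Finset.sum_congr rfl fun j _ => (smul_smul _ _ _)
    have h3 : ∑ j : Fin d', (L * e j.succ - R * (∑ jj, e jj)) • kk j
        = ∑ j : Fin d', (e j.succ * L) • kk j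
          - ∑ j : Fin d', ((∑ jj, e jj) * R) • kk j := by
      rw [← Finset.sum_sub_distrib]
      refine Finset.sum_congr rfl fun j _ => ?_
      rw [← sub_smul]
      congr 1
      ring
    calc ∑ jj, e jj • s jj
        = e 0 • s 0 + ∑ j : Fin d', e j.succ • s j.succ := Fin.sum_univ_succ _
      _ = e 0 • V0 + ((∑ j : Fin d', e j.succ) • V0
            + ∑ j : Fin d', (e j.succ * L) • kk j) := by
          rw [← h1]
          simp only [hs, Fin.cons_succ, Fin.cons_zero]
      _ = (∑ jj, e jj) • V0 + ∑ j : Fin d', (e j.succ * L) • kk j := by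
          rw [hE, add_smul, add_assoc]
      _ = (∑ jj, e jj) • z - ∑ j : Fin d', ((∑ jj, e jj) * R) • kk j
            + ∑ j : Fin d', (e j.succ * L) • kk j := by rw [h2]
      _ = (∑ jj, e jj) • z
            + ∑ j : Fin d', (L * e j.succ - R * (∑ jj, e jj)) • kk j := by
          rw [h3]; abel
  have hsind : LinearIndependent ℚ s := by
    rw [Fintype.linearIndependent_iff]
    intro g hg
    have hexp : (∑ jj, g jj) • z
        + ∑ j : Fin d', (L * g j.succ - R * (∑ jj, g jj)) • kk j = 0 := by
      rw [← expand g]; exact hg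
    have hGsum : ∑ jj, (Fin.cons (∑ jj, g jj)
        (fun j => L * g j.succ - R * (∑ jj, g jj)) : Fin (d' + 1) → ℚ) jj
          • (Fin.cons z kk : Fin (d' + 1) → V) jj = 0 := by
      rw [Fin.sum_univ_succ]
      simp only [Fin.cons_succ, Fin.cons_zero]
      exact hexp
    have hG0 := Fintype.linearIndependent_iff.mp hcons _ hGsum
    have hE0 : ∑ jj, g jj = 0 := by simpa using hG0 0
    have hgs : ∀ j : Fin d', g j.succ = 0 := by
      intro j
      have h5 := hG0 j.succ
      simp only [Fin.cons_succ] at h5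
      rw [hE0, mul_zero, sub_zero] at h5
      exact (mul_eq_zero.mp h5).resolve_left hL0.ne'
    intro jj
    refine Fin.cases ?_ hgs jj
    have h6 : ∑ j : Fin d', g j.succ = 0 := Finset.sum_eq_zero fun j _ => hgs j
    rw [Fin.sum_univ_succ, h6] at hE0
    simpa using hE0
  have hcnn : ∀ i jj, 0 ≤ c i jj := by
    intro i jj
    refine Fin.cases ?_ ?_ jj
    · simp only [hc, Fin.cons_zero]
      refine mul_nonneg (hf i).le ?_
      have hS : ∑ j : Fin d', (γ i j + R) ≤ L := by
        have h1 : ∑ j : Fin d', γ i j ≤ ∑ j : Fin d', |γ i j| :=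
          Finset.sum_le_sum fun j _ => le_abs_self _
        have h2 := hRγsum i
        have h3 : ∑ j : Fin d', (γ i j + R) = (∑ j : Fin d', γ i j) + d' * R := by
          rw [Finset.sum_add_distrib, Finset.sum_const, Finset.card_univ,
            Fintype.card_fin, nsmul_eq_mul]
        rw [h3, hLdef]
        have : (0:ℚ) ≤ R := by linarith
        nlinarith
      have hq : (∑ j : Fin d', (γ i j + R)) / L ≤ 1 := (div_le_one hL0).mpr hS
      linarith
    · intro j
      simp only [hc, Fin.cons_succ]
      refine mul_nonneg (hf i).le (div_nonneg ?_ hL0.le)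
      have h := (abs_le.mp (hRγ i j)).1
      linarith
  have hucs : ∀ i, u i = ∑ jj, c i jj • s jj := by
    intro i
    rw [expand (c i)]
    have hsumc : ∑ jj, c i jj = f (u i) := by
      rw [Fin.sum_univ_succ]
      simp only [hc, Fin.cons_succ, Fin.cons_zero]
      rw [← Finset.mul_sum, ← Finset.sum_div]
      have hLne : L ≠ 0 := hL0.ne'
      field_simp
      ring
    rw [hsumc]
    have hcoef : ∀ j : Fin d', L * c i j.succ - R * f (u i) = f (u i) * γ i j := by
      intro j
      simp only [hc, Fin.cons_succ]
      have hLne : L ≠ 0 := hL0.ne'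
      field_simp
      ring
    symm
    calc f (u i) • z + ∑ j : Fin d', (L * c i j.succ - R * f (u i)) • kk j
        = f (u i) • z + ∑ j : Fin d', (f (u i) * γ i j) • kk j := by
          congr 1
          exact Finset.sum_congr rfl fun j _ => by rw [hcoef j]
      _ = f (u i) • z + f (u i) • ∑ j : Fin d', γ i j • kk j := by
          rw [Finset.smul_sum]
          congr 1
          exact Finset.sum_congr rfl fun j _ => (smul_smul _ _ _).symm
      _ = f (u i) • (z + η i) := by rw [← hγ i, ← smul_add]
      _ = u i := (huη i).symm
  exact ⟨d' + 1, s, c, hsind, hcnn, hucs⟩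

private lemma sum_combo {n c : ℕ} (q α : Fin n → ℚ) (β : Fin n → Fin c → ℚ)
    (r : Fin c → ℝ) (v : Fin n → ℝ)
    (hval : ∀ k, v k = (α k : ℝ) + ∑ j, (β k j : ℝ) * r j) :
    ∑ k, (q k : ℝ) * v k
      = ((∑ k, q k * α k : ℚ) : ℝ) + ∑ j, ((∑ k, q k * β k j : ℚ) : ℝ) * r j := by
  have h1 : ∀ k, (q k : ℝ) * v k
      = (q k : ℝ) * (α k : ℝ) + ∑ j, ((q k : ℝ) * (β k j : ℝ)) * r j := by
    intro k
    rw [hval k, mul_add, Finset.mul_sum]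
    congr 1
    exact Finset.sum_congr rfl fun j _ => (mul_assoc _ _ _).symm
  calc ∑ k, (q k : ℝ) * v k
      = ∑ k, ((q k : ℝ) * (α k : ℝ) + ∑ j, ((q k : ℝ) * (β k j : ℝ)) * r j) :=
        Finset.sum_congr rfl fun k _ => h1 k
    _ = (∑ k, (q k : ℝ) * (α k : ℝ))
          + ∑ k, ∑ j, ((q k : ℝ) * (β k j : ℝ)) * r j := Finset.sum_add_distrib
    _ = ((∑ k, q k * α k : ℚ) : ℝ) + ∑ j, ((∑ k, q k * β k j : ℚ) : ℝ) * r j := by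
        push_cast
        rw [Finset.sum_comm]
        congr 1
        exact Finset.sum_congr rfl fun j _ => (Finset.sum_mul _ _ _).symm

private lemma insert_rep {c : ℕ} {r : Fin c → ℝ} {y : ℝ}
    (hy : y ∈ insert (1 : ℝ) (Set.range r)) :
    ∃ (α : ℚ) (β : Fin c → ℚ), 0 ≤ α ∧ (∀ j, 0 ≤ β j) ∧
      y = (α : ℝ) + ∑ j, (β j : ℝ) * r j := by
  rcases Set.mem_insert_iff.mp hy with h1 | ⟨j0, hj0⟩
  · exact ⟨1, 0, zero_le_one, fun j => le_refl _, by simp [h1]⟩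
  · refine ⟨0, fun j => if j = j0 then 1 else 0, le_refl _,
      fun j => by dsimp only; split <;> norm_num, ?_⟩
    have : ∑ j, (((if j = j0 then (1:ℚ) else 0) : ℚ) : ℝ) * r j = r j0 := by
      rw [Finset.sum_eq_single j0]
      · simp
      · intro j _ hj; simp [hj]
      · intro h; exact absurd (Finset.mem_univ j0) h
    rw [this, ← hj0]
    simp



/-- Lemma 6.6: for a set `Γ` of non-negative reals, the following are equivalent:
(1) every finite subset `Γ₀ ⊆ Γ` is contained in `Span_{ℚ≥0}({1, r₁, …, r_c})` for some
reals with `1, r₁, …, r_c` linearly independent over `ℚ`;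
(2) `Span_{ℚ≥0}(Γ \ ℚ) ∩ (ℚ \ {0}) = ∅`. -/
theorem stmt_7 (Γ : Set ℝ) (hΓ : ∀ x ∈ Γ, 0 ≤ x) :
    (∀ Γ₀ : Set ℝ, Γ₀ ⊆ Γ → Γ₀.Finite →
      ∃ (c : ℕ) (r : Fin c → ℝ),
        (∀ (q₀ : ℚ) (q : Fin c → ℚ),
          (q₀ : ℝ) + ∑ i, (q i : ℝ) * r i = 0 → q₀ = 0 ∧ ∀ i, q i = 0) ∧
        Γ₀ ⊆ qSpan (insert (1 : ℝ) (Set.range r)))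
    ↔ qSpan (Γ \ ratSet) ∩ (ratSet \ {0}) = ∅ := by
  constructor
  · intro h1
    rw [Set.eq_empty_iff_forall_notMem]
    rintro x ⟨hx1, hx2⟩
    obtain ⟨n, q, v, hq, hv, hxval⟩ := hx1
    obtain ⟨ρ, hρ⟩ := hx2.1
    have hx0 : x ≠ 0 := hx2.2
    have hvΓ : ∀ k, v k ∈ Γ := fun k => (hv k).1
    have hvirr : ∀ k, v k ∉ ratSet := fun k => (hv k).2
    have hvpos : ∀ k, 0 < v k := by
      intro k
      rcases lt_or_eq_of_le (hΓ _ (hvΓ k)) with h | h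
      · exact h
      · exact absurd ⟨0, by simpa using h⟩ (hvirr k)
    obtain ⟨c, r, hind, hsub⟩ :=
      h1 (Set.range v) (Set.range_subset_iff.mpr hvΓ) (Set.finite_range v)
    have hrep : ∀ k, ∃ (α : ℚ) (β : Fin c → ℚ), 0 ≤ α ∧ (∀ j, 0 ≤ β j) ∧
        v k = (α : ℝ) + ∑ j, (β j : ℝ) * r j := by
      intro k
      obtain ⟨N, a, ww, ha, hw, hveq⟩ := hsub (Set.mem_range_self k)
      have hrep2 : ∀ l : Fin N, ∃ (α : ℚ) (β : Fin c → ℚ), 0 ≤ α ∧ (∀ j, 0 ≤ β j) ∧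
          ww l = (α : ℝ) + ∑ j, (β j : ℝ) * r j := fun l => insert_rep (hw l)
      choose α2 β2 hα2 hβ2 hval2 using hrep2
      exact ⟨∑ l, a l * α2 l, fun j => ∑ l, a l * β2 l j,
        Finset.sum_nonneg fun l _ => mul_nonneg (ha l) (hα2 l),
        fun j => Finset.sum_nonneg fun l _ => mul_nonneg (ha l) (hβ2 l j),
        hveq.trans (sum_combo a α2 β2 r ww hval2)⟩
    choose α β hα hβ hval using hrep
    have key := sum_combo q α β r v hval
    have hqpos : ∃ k, 0 < q k := by
      by_contra hal; push_neg at hal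
      have hz : ∀ k, q k = 0 := fun k => le_antisymm (hal k) (hq k)
      apply hx0; rw [hxval]; simp [hz]
    obtain ⟨k0, hk0⟩ := hqpos
    have hrel : ((∑ k, q k * α k - ρ : ℚ) : ℝ)
        + ∑ j, ((∑ k, q k * β k j : ℚ) : ℝ) * r j = 0 := by
      have keyx : x = ((∑ k, q k * α k : ℚ) : ℝ)
          + ∑ j, ((∑ k, q k * β k j : ℚ) : ℝ) * r j := hxval.trans key
      push_cast at keyx ⊢
      rw [← hρ] at keyx
      linarith
    obtain ⟨hA0, hB0⟩ := hind _ _ hrel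
    have hβk0 : ∀ j, β k0 j = 0 := by
      intro j
      have h7 := hB0 j
      have h8 := (Finset.sum_eq_zero_iff_of_nonneg
        (fun k _ => mul_nonneg (hq k) (hβ k j))).mp h7 k0 (Finset.mem_univ k0)
      exact (mul_eq_zero.mp h8).resolve_left (ne_of_gt hk0)
    exact hvirr k0 ⟨α k0, by rw [hval k0]; simp [hβk0]⟩
  · intro h2 Γ₀ hΓ₀sub hΓ₀fin
    -- the functional φ detecting the rational part
    obtain ⟨E, hE⟩ := Submodule.exists_isCompl (Submodule.span ℚ {(1:ℝ)})
    set π := Submodule.linearProjOfIsCompl _ E hE with hπdef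
    set φ : ℝ →ₗ[ℚ] ℚ :=
      ((LinearEquiv.toSpanNonzeroSingleton ℚ ℝ 1 one_ne_zero).symm.toLinearMap) ∘ₗ π
      with hφdef
    have h1mem : (1:ℝ) ∈ Submodule.span ℚ {(1:ℝ)} := Submodule.mem_span_singleton_self 1
    have hφ1 : φ (1:ℝ) = 1 := by
      have hπ1 : π (1:ℝ) = ⟨1, h1mem⟩ :=
        Submodule.linearProjOfIsCompl_apply_left hE ⟨1, h1mem⟩
      rw [hφdef]
      simp only [LinearMap.comp_apply, hπ1, LinearEquiv.coe_coe]
      rw [LinearEquiv.symm_apply_eq, LinearEquiv.toSpanNonzeroSingleton_one]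
    have hφq : ∀ ρ : ℚ, φ ((ρ : ℚ) : ℝ) = ρ := by
      intro ρ
      have hcast : ((ρ : ℚ) : ℝ) = ρ • (1:ℝ) := by rw [Rat.smul_def, mul_one]
      rw [hcast, map_smul, hφ1, smul_eq_mul, mul_one]
    -- enumerate the irrational elements of Γ₀
    obtain ⟨m, tem, htem⟩ := (hΓ₀fin.subset (Set.diff_subset)).fin_embedding
      (s := Γ₀ \ ratSet)
    set t : Fin m → ℝ := fun i => tem i with htdef
    have hti : ∀ i, t i ∈ Γ₀ \ ratSet := fun i => htem ▸ Set.mem_range_self i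
    have htΓ : ∀ i, t i ∈ Γ := fun i => hΓ₀sub (hti i).1
    have htpos : ∀ i, 0 < t i := by
      intro i
      rcases lt_or_eq_of_le (hΓ _ (htΓ i)) with h | h
      · exact h
      · exact absurd ⟨0, by simpa using h⟩ (hti i).2
    set w : Fin m → ℝ := fun i => t i - ((φ (t i) : ℚ) : ℝ) with hwdef
    have hφw : ∀ i, φ (w i) = 0 := by
      intro i
      rw [hwdef]
      simp only [map_sub, hφq, sub_self]
    have hwind : ∀ a : Fin m → ℚ, (∀ i, 0 ≤ a i) → ∑ i, a i • w i = 0 → ∀ i, a i = 0 := by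
      intro a ha hsum
      have h8 : ∑ i, (a i : ℝ) * t i = ((∑ i, a i * φ (t i) : ℚ) : ℝ) := by
        have hterm : ∀ i, a i • w i = (a i : ℝ) * t i - (a i : ℝ) * ((φ (t i) : ℚ) : ℝ) := by
          intro i; rw [hwdef, Rat.smul_def, mul_sub]
        rw [Finset.sum_congr rfl (fun i _ => hterm i), Finset.sum_sub_distrib] at hsum
        push_cast
        linarith
      have hmem : ∑ i, (a i : ℝ) * t i ∈ qSpan (Γ \ ratSet) :=
        ⟨m, a, t, ha, fun i => ⟨htΓ i, (hti i).2⟩, rfl⟩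
      have hzero : ∑ i, (a i : ℝ) * t i = 0 := by
        by_contra hnz
        have hxx : ∑ i, (a i : ℝ) * t i ∈ qSpan (Γ \ ratSet) ∩ (ratSet \ {0}) :=
          ⟨hmem, ⟨_, h8.symm⟩, hnz⟩
        rw [h2] at hxx
        exact hxx
      intro i
      by_contra hai
      have hpos : 0 < a i := lt_of_le_of_ne (ha i) (Ne.symm hai)
      have hsp : 0 < ∑ i, (a i : ℝ) * t i :=
        Finset.sum_pos' (fun i _ => mul_nonneg (by exact_mod_cast ha i) (htpos i).le)
          ⟨i, Finset.mem_univ i, mul_pos (by exact_mod_cast hpos) (htpos i)⟩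
      rw [hzero] at hsp
      exact lt_irrefl _ hsp
    -- coordinates in the span of the w's
    set U := Submodule.span ℚ (Set.range w) with hUdef
    haveI : FiniteDimensional ℚ U := FiniteDimensional.span_of_finite ℚ (Set.finite_range w)
    set b := Module.finBasis ℚ U with hbdef
    set wU : Fin m → U := fun i => ⟨w i, Submodule.subset_span (Set.mem_range_self i)⟩
      with hwU
    set uu : Fin m → Fin (Module.finrank ℚ U) → ℚ := fun i => b.equivFun (wU i) with huu
    have huind : ∀ a : Fin m → ℚ, (∀ i, 0 ≤ a i) → ∑ i, a i • uu i = 0 → ∀ i, a i = 0 := by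
      intro a ha hsum
      apply hwind a ha
      have hWsum : ∑ i, a i • wU i = 0 := by
        apply b.equivFun.injective
        rw [map_sum, map_zero]
        simp only [map_smul]
        simpa [huu] using hsum
      have h9 := congrArg (Subtype.val) hWsum
      rw [AddSubmonoidClass.coe_finset_sum] at h9
      simpa using h9
    obtain ⟨f0, hf0⟩ := gordan m uu huind
    set dotL : (Fin (Module.finrank ℚ U) → ℚ) →ₗ[ℚ] ℚ :=
      { toFun := fun x => qdot f0 x
        map_add' := by
          intro x y
          simp [qdot, mul_add, Finset.sum_add_distrib]
        map_smul' := by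
          intro a x
          simp [qdot, Finset.mul_sum, mul_assoc, mul_comm, mul_left_comm] } with hdotL
    set f : U →ₗ[ℚ] ℚ := dotL ∘ₗ b.equivFun.toLinearMap with hfdef
    have hfw : ∀ i, 0 < f (wU i) := by
      intro i
      have : f (wU i) = qdot f0 (uu i) := rfl
      rw [this]; exact hf0 i
    obtain ⟨k, sU, cc, hsind, hccnn, hwcs⟩ := simplexCone wU f hfw
    set σ : Fin k → ℝ := fun j => ((sU j : U) : ℝ) with hσdef
    have hσind : LinearIndependent ℚ σ :=
      hsind.map' U.subtype (Submodule.ker_subtype U)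
    have hUker : U ≤ LinearMap.ker φ := by
      rw [hUdef, Submodule.span_le]
      rintro x ⟨i, rfl⟩
      exact hφw i
    have hσφ : ∀ j, φ (σ j) = 0 := fun j => hUker (sU j).2
    have hwσ : ∀ i, w i = ∑ j, (cc i j : ℝ) * σ j := by
      intro i
      have h10 := congrArg (Subtype.val) (hwcs i)
      rw [AddSubmonoidClass.coe_finset_sum] at h10
      simpa [Rat.smul_def] using h10
    have hSi : ∀ i, 0 < ∑ j, cc i j := by
      intro i
      by_contra hle
      push_neg at hle
      have h10 : ∑ j, cc i j = 0 :=
        le_antisymm hle (Finset.sum_nonneg fun j _ => hccnn i j)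
      have hz : ∀ j, cc i j = 0 :=
        fun j => (Finset.sum_eq_zero_iff_of_nonneg
          (fun j _ => hccnn i j)).mp h10 j (Finset.mem_univ j)
      have hw0 : w i = 0 := by rw [hwσ i]; simp [hz]
      rw [hwdef] at hw0
      exact (hti i).2 ⟨φ (t i), by dsimp only at hw0; linarith⟩
    set M : ℚ := 1 + ∑ i, (max 0 (- φ (t i))) / (∑ j, cc i j) with hM
    have hMi : ∀ i, 0 ≤ φ (t i) + M * (∑ j, cc i j) := by
      intro i
      have hterm : (max 0 (- φ (t i))) / (∑ j, cc i j) ≤ M := by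
        have hss := Finset.single_le_sum
          (f := fun i => (max 0 (- φ (t i))) / (∑ j, cc i j))
          (fun i _ => div_nonneg (le_max_left _ _) (hSi i).le) (Finset.mem_univ i)
        rw [hM]; linarith
      have h12 : max 0 (- φ (t i)) ≤ M * (∑ j, cc i j) := by
        have h13 := mul_le_mul_of_nonneg_right hterm (hSi i).le
        rwa [div_mul_cancel₀ _ (hSi i).ne'] at h13
      have h14 := le_max_right 0 (- φ (t i))
      linarith
    refine ⟨k, fun j => σ j - (M : ℝ), ?_, ?_⟩
    · intro q₀ qq hrel
      have h13 : ∑ j, (qq j : ℝ) * σ j = (((∑ j, qq j) * M - q₀ : ℚ) : ℝ) := by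
        have hterm : ∀ j, (qq j : ℝ) * (σ j - (M : ℝ))
            = (qq j : ℝ) * σ j - (qq j : ℝ) * (M : ℝ) := fun j => by ring
        rw [Finset.sum_congr rfl (fun j _ => hterm j), Finset.sum_sub_distrib] at hrel
        have hsm : ∑ j, (qq j : ℝ) * (M : ℝ) = (∑ j, (qq j : ℝ)) * (M : ℝ) :=
          (Finset.sum_mul _ _ _).symm
        rw [hsm] at hrel
        push_cast
        linarith
      have h14 : φ (∑ j, (qq j : ℝ) * σ j) = 0 := by
        have hterm : ∀ j, (qq j : ℝ) * σ j = qq j • σ j :=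
          fun j => (Rat.smul_def _ _).symm
        rw [Finset.sum_congr rfl (fun j _ => hterm j), map_sum]
        simp [hσφ]
      rw [h13, hφq] at h14
      have h16 : ∑ j, qq j • σ j = 0 := by
        have h17 : ∑ j, (qq j : ℝ) * σ j = 0 := by
          rw [h13, h14]
          norm_num
        rw [← h17]
        exact Finset.sum_congr rfl fun j _ => Rat.smul_def _ _
      have hqz := Fintype.linearIndependent_iff.mp hσind qq h16
      constructor
      · have h18 : ∑ j, qq j = 0 := Finset.sum_eq_zero fun j _ => hqz j
        rw [h18] at h14
        linarith
      · exact hqz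
    · intro x hx
      by_cases hxrat : x ∈ ratSet
      · obtain ⟨ρ, hρ⟩ := hxrat
        have hρ' : (ρ : ℝ) = x := hρ
        have hρ0 : 0 ≤ ρ := by
          have := hΓ x (hΓ₀sub hx)
          rw [← hρ'] at this
          exact_mod_cast this
        exact ⟨1, fun _ => ρ, fun _ => 1, fun _ => hρ0,
          fun _ => Set.mem_insert _ _, by simp [hρ']⟩
      · have hxt : x ∈ Set.range t := by
          rw [show Set.range t = Γ₀ \ ratSet from htem]
          exact ⟨hx, hxrat⟩
        obtain ⟨i, rfl⟩ := hxt
        refine ⟨k + 1, Fin.cons (φ (t i) + M * (∑ j, cc i j)) (cc i),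
          Fin.cons 1 (fun j => σ j - (M : ℝ)), ?_, ?_, ?_⟩
        · intro jj
          refine Fin.cases ?_ ?_ jj
          · exact hMi i
          · exact fun j => hccnn i j
        · intro jj
          refine Fin.cases ?_ ?_ jj
          · exact Set.mem_insert _ _
          · exact fun j => Set.mem_insert_of_mem _ ⟨j, rfl⟩
        · rw [Fin.sum_univ_succ]
          simp only [Fin.cons_succ, Fin.cons_zero]
          have h17 : t i = ((φ (t i) : ℚ) : ℝ) + ∑ j, (cc i j : ℝ) * σ j := by
            rw [← hwσ i, hwdef]
            ring
          have h18 : ∑ j, (cc i j : ℝ) * (σ j - (M : ℝ))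
              = ∑ j, (cc i j : ℝ) * σ j - (∑ j, (cc i j : ℝ)) * (M : ℝ) := by
            rw [Finset.sum_mul, ← Finset.sum_sub_distrib]
            exact Finset.sum_congr rfl fun j _ => by ring
          rw [h18]
          push_cast
          linarith [h17]

end Helpers
end

section
/- Suppose (2) holds for Γ ⊆ ℝ_{≥0}: Span_{ℚ≥0}(Γ \ ℚ) ∩ (ℚ \ {0}) = ∅. If Γ̂ ⊆ [0,1] ∩ (ℚ + Span_{ℚ≥0}(Γ)) is a finite set, then Span_{ℚ≥0}(Γ̂ \ ℚ) ∩ (ℚ \ {0}) = ∅. -/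
open scoped BigOperators

lemma qSpan_zero (S : Set ℝ) : (0:ℝ) ∈ qSpan S :=
  ⟨0, ![], ![], by simp, by simp, by simp⟩

lemma qSpan_single {S : Set ℝ} {c : ℚ} {v : ℝ} (hc : 0 ≤ c) (hv : v ∈ S) :
    (c : ℝ) * v ∈ qSpan S :=
  ⟨1, fun _ => c, fun _ => v, fun _ => hc, fun _ => hv, by simp⟩

lemma qSpan_add {S : Set ℝ} {x y : ℝ} (hx : x ∈ qSpan S) (hy : y ∈ qSpan S) :
    x + y ∈ qSpan S := by
  obtain ⟨n, q, v, hq, hv, rfl⟩ := hx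
  obtain ⟨m, p, w, hp, hw, rfl⟩ := hy
  refine ⟨n + m, Fin.append q p, Fin.append v w, ?_, ?_, ?_⟩
  · intro i
    refine Fin.addCases (fun j => ?_) (fun j => ?_) i
    · simpa using hq j
    · simpa using hp j
  · intro i
    refine Fin.addCases (fun j => ?_) (fun j => ?_) i
    · simpa using hv j
    · simpa using hw j
  · rw [Fin.sum_univ_add]
    simp

lemma qSpan_smul {S : Set ℝ} {c : ℚ} {x : ℝ} (hc : 0 ≤ c) (hx : x ∈ qSpan S) :
    (c : ℝ) * x ∈ qSpan S := by
  obtain ⟨n, q, v, hq, hv, rfl⟩ := hx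
  refine ⟨n, fun i => c * q i, v, fun i => mul_nonneg hc (hq i), hv, ?_⟩
  rw [Finset.mul_sum]
  congr 1; ext i; push_cast; ring

lemma qSpan_nonneg {S : Set ℝ} (hS : ∀ x ∈ S, 0 ≤ x) {x : ℝ} (hx : x ∈ qSpan S) :
    0 ≤ x := by
  obtain ⟨n, q, v, hq, hv, rfl⟩ := hx
  exact Finset.sum_nonneg fun i _ =>
    mul_nonneg (by exact_mod_cast hq i) (hS _ (hv i))

lemma qSpan_decomp {Γ : Set ℝ} {s : ℝ} (hs : s ∈ qSpan Γ) :
    ∃ a : ℚ, ∃ t ∈ qSpan (Γ \ ratSet), s = (a : ℝ) + t := by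
  obtain ⟨n, q, v, hq, hv, rfl⟩ := hs
  induction n with
  | zero => exact ⟨0, 0, qSpan_zero _, by simp⟩
  | succ n ih =>
    obtain ⟨a, t, ht, heq⟩ := ih (fun i => q i.succ) (fun i => v i.succ)
      (fun i => hq i.succ) (fun i => hv i.succ)
    rw [Fin.sum_univ_succ]
    by_cases hr : v 0 ∈ ratSet
    · obtain ⟨w, hw⟩ := hr
      refine ⟨q 0 * w + a, t, ht, ?_⟩
      simp only at hw
      rw [heq, ← hw]
      push_cast
      ring
    · refine ⟨a, (q 0 : ℝ) * v 0 + t, qSpan_add (qSpan_single (hq 0) ⟨hv 0, hr⟩) ht, ?_⟩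
      rw [heq]; ring

/-- Lemma 6.6, "moreover" part: if `Γ ⊆ ℝ_{≥0}` satisfies
`Span_{ℚ≥0}(Γ \ ℚ) ∩ (ℚ \ {0}) = ∅` and `Γ̂ ⊆ [0,1] ∩ (ℚ + Span_{ℚ≥0}(Γ))` is finite,
then `Span_{ℚ≥0}(Γ̂ \ ℚ) ∩ (ℚ \ {0}) = ∅`. -/
theorem stmt_8 (Γ : Set ℝ) (hΓ : ∀ x ∈ Γ, 0 ≤ x)
    (h2 : qSpan (Γ \ ratSet) ∩ (ratSet \ {0}) = ∅)
    (Γhat : Set ℝ) (hfin : Γhat.Finite)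
    (hsub : Γhat ⊆ Set.Icc (0 : ℝ) 1 ∩ {x | ∃ q : ℚ, ∃ s ∈ qSpan Γ, x = (q : ℝ) + s}) :
    qSpan (Γhat \ ratSet) ∩ (ratSet \ {0}) = ∅ := by
  rw [Set.eq_empty_iff_forall_notMem]
  rintro x ⟨⟨n, c, γ, hc, hγ, hxsum⟩, ⟨q, hq⟩, hx0⟩
  simp only [Set.mem_singleton_iff] at hx0
  -- decompose each γ i
  have hdec : ∀ i, ∃ r : ℚ, ∃ t ∈ qSpan (Γ \ ratSet), γ i = (r : ℝ) + t := by
    intro i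
    obtain ⟨p, s, hs, hps⟩ := (hsub (hγ i).1).2
    obtain ⟨a, t, ht, hat⟩ := qSpan_decomp hs
    exact ⟨p + a, t, ht, by rw [hps, hat]; push_cast; ring⟩
  choose r t ht hγeq using hdec
  have hΓ' : ∀ x ∈ Γ \ ratSet, 0 ≤ x := fun x hx => hΓ x hx.1
  have htnn : ∀ i, 0 ≤ t i := fun i => qSpan_nonneg hΓ' (ht i)
  -- t i ≠ 0
  have htne : ∀ i, t i ≠ 0 := by
    intro i h0
    apply (hγ i).2
    exact ⟨r i, by rw [hγeq i, h0, add_zero]⟩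
  -- T ∈ qSpan(Γ\ℚ)
  set T : ℝ := ∑ i, (c i : ℝ) * t i with hT
  have hTspan : T ∈ qSpan (Γ \ ratSet) := by
    apply Finset.sum_induction _ (· ∈ qSpan (Γ \ ratSet))
      (fun _ _ => qSpan_add) (qSpan_zero _)
    exact fun i _ => qSpan_smul (hc i) (ht i)
  -- T is rational
  have hxT : x = (∑ i, (c i : ℝ) * (r i : ℝ)) + T := by
    rw [hxsum, hT, ← Finset.sum_add_distrib]
    congr 1; ext i; rw [hγeq i]; ring
  have hTrat : T = ((q - ∑ i, c i * r i : ℚ) : ℝ) := by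
    simp only at hq
    push_cast
    rw [hq, hxT]; ring
  -- T = 0 by h2
  have hT0 : T = 0 := by
    by_contra hT0
    have : T ∈ qSpan (Γ \ ratSet) ∩ (ratSet \ {0}) :=
      ⟨hTspan, ⟨_, hTrat.symm⟩, hT0⟩
    rw [h2] at this
    exact this
  -- each term zero, so c i = 0
  have hterm : ∀ i ∈ Finset.univ, (c i : ℝ) * t i = 0 := by
    rw [← Finset.sum_eq_zero_iff_of_nonneg
      (fun i _ => mul_nonneg (by exact_mod_cast hc i) (htnn i))]
    exact hT0
  have hc0 : ∀ i, (c i : ℝ) = 0 := by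
    intro i
    rcases mul_eq_zero.mp (hterm i (Finset.mem_univ i)) with h | h
    · exact h
    · exact absurd h (htne i)
  apply hx0
  rw [hxsum]
  exact Finset.sum_eq_zero fun i _ => by rw [hc0 i, zero_mul]
end

section
/- Under the same setup: if w_k ≥ 2, then 1 − a_k ≥ (1 − a_{k'})/2 for any vertex v_{k'} adjacent to v_k, and 2a_k ≤ a_{k₁} + a_{k₂} for any two distinct vertices v_{k₁}, v_{k₂} adjacent to v_k. -/
open scoped BigOperators

/-- Lemma 4.2(2): in the dual graph of a resolution of an lc surface pair `(X, B)`
(setup as in Lemma 4.2: `a i = a(E_i,X,B) ∈ [0,1]`, `w i = −E_i·E_i`, `c k = B_Y·E_k ≥ 0`,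
and for each `k` the adjunction inequality
`0 ≥ -2 + w_k a_k + Σ_{i adjacent to k}(1−a_i) + B_Y·E_k` holds):
if `w_k ≥ 2`, then `1 − a_k ≥ (1 − a_{k'})/2` for every vertex `v_{k'}` adjacent to `v_k`,
and `2 a_k ≤ a_{k₁} + a_{k₂}` for any two distinct vertices adjacent to `v_k`. -/
theorem stmt_12 {ι : Type*} [Fintype ι] [DecidableEq ι]
    (Adj : ι → ι → Prop) [DecidableRel Adj]
    (a : ι → ℝ) (w : ι → ℕ) (c : ι → ℝ)
    (ha : ∀ i, 0 ≤ a i ∧ a i ≤ 1) (hc : ∀ i, 0 ≤ c i)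
    (hadj : ∀ k, (0 : ℝ) ≥ -2 + (w k : ℝ) * a k
      + (∑ i ∈ Finset.univ.filter (fun i => Adj k i), (1 - a i)) + c k)
    (k : ι) (hw : 2 ≤ w k) :
    (∀ k', Adj k k' → 1 - a k ≥ (1 - a k') / 2) ∧
    (∀ k₁ k₂, Adj k k₁ → Adj k k₂ → k₁ ≠ k₂ → 2 * a k ≤ a k₁ + a k₂) := by
  have hk := hadj k
  have hwa : (2:ℝ) * a k ≤ (w k : ℝ) * a k := by
    apply mul_le_mul_of_nonneg_right _ (ha k).1
    exact_mod_cast hw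
  have hck := hc k
  constructor
  · intro k' hk'
    have hmem : k' ∈ Finset.univ.filter (fun i => Adj k i) := by simp [hk']
    have hsum : 1 - a k' ≤ ∑ i ∈ Finset.univ.filter (fun i => Adj k i), (1 - a i) :=
      Finset.single_le_sum (f := fun i => 1 - a i) (fun i _ => show (0:ℝ) ≤ 1 - a i by linarith [(ha i).2]) hmem
    linarith
  · intro k₁ k₂ h1 h2 hne
    have hsub : ({k₁, k₂} : Finset ι) ⊆ Finset.univ.filter (fun i => Adj k i) := by
      intro x hx
      simp only [Finset.mem_insert, Finset.mem_singleton] at hx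
      rcases hx with rfl | rfl <;> simp [h1, h2]
    have hsum := Finset.sum_le_sum_of_subset_of_nonneg hsub
      (fun i _ _ => by linarith [(ha i).2] : ∀ i ∈ _, i ∉ _ → (0:ℝ) ≤ 1 - a i)
    rw [Finset.sum_pair hne] at hsum
    linarith
end

section
/- Under the same setup: if v₀, v₁, …, v_n are vertices of the dual graph such that v_i is adjacent to v_{i+1} for 0 ≤ i ≤ n−1, w_i ≥ 2 for 2 ≤ i ≤ n−1, w₁ ≥ 3, a₁ ≥ a₀, and a₁ ≥ ε for some ε > 0, then n ≤ ⌊1/ε⌋. -/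
open scoped BigOperators

/-- Lemma 4.2(5): setup as in Lemma 4.2 (dual graph of a resolution of an lc surface pair:
`a i = a(E_i,X,B) ∈ [0,1]`, weights `w i = −E_i·E_i`, `c k = B_Y·E_k ≥ 0`, adjacency
symmetric, and for each `k` the adjunction inequality
`0 ≥ −2 + w_k a_k + Σ_{i adjacent to k}(1−a_i) + B_Y·E_k`).
If `v_0, v_1, …, v_n` are (distinct) vertices with `v_i` adjacent to `v_{i+1}` for
`0 ≤ i ≤ n−1`, `w_i ≥ 2` for `2 ≤ i ≤ n−1`, `w_1 ≥ 3`, `a_1 ≥ a_0` and `a_1 ≥ ε > 0`,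
then `n ≤ ⌊1/ε⌋`. -/
theorem stmt_13 {ι : Type*} [Fintype ι] [DecidableEq ι]
    (Adj : ι → ι → Prop) [DecidableRel Adj] (hsymm : ∀ i j, Adj i j → Adj j i)
    (a : ι → ℝ) (w : ι → ℕ) (c : ι → ℝ)
    (ha : ∀ i, 0 ≤ a i ∧ a i ≤ 1) (hc : ∀ i, 0 ≤ c i)
    (hadj : ∀ k, (0 : ℝ) ≥ -2 + (w k : ℝ) * a k
      + (∑ i ∈ Finset.univ.filter (fun i => Adj k i), (1 - a i)) + c k)
    (ε : ℝ) (hε : 0 < ε)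
    (n : ℕ) (hn : 1 ≤ n) (v : ℕ → ι)
    (hinj : ∀ i j, i ≤ n → j ≤ n → v i = v j → i = j)
    (hpath : ∀ i, i < n → Adj (v i) (v (i + 1)))
    (hwmid : ∀ i, 2 ≤ i → i + 1 ≤ n → 2 ≤ w (v i))
    (hw1 : 3 ≤ w (v 1))
    (ha01 : a (v 0) ≤ a (v 1)) (ha1ε : ε ≤ a (v 1)) :
    (n : ℤ) ≤ ⌊1 / ε⌋ := by
  have key : ∀ m, 1 ≤ m → m + 1 ≤ n →
      (w (v m) : ℝ) * a (v m) - a (v (m-1)) - a (v (m+1)) ≤ 0 := by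
    intro m hm hmn
    have h1 : Adj (v m) (v (m-1)) := by
      have h := hpath (m-1) (by omega)
      have hm1 : m - 1 + 1 = m := by omega
      rw [hm1] at h
      exact hsymm _ _ h
    have h2 : Adj (v m) (v (m+1)) := hpath m (by omega)
    have hne : v (m-1) ≠ v (m+1) := fun h => by
      have := hinj (m-1) (m+1) (by omega) (by omega) h; omega
    have hsub : ({v (m-1), v (m+1)} : Finset ι) ⊆ Finset.univ.filter (fun i => Adj (v m) i) := by
      intro x hx
      simp only [Finset.mem_insert, Finset.mem_singleton] at hx
      rcases hx with rfl | rfl <;> simp [h1, h2]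
    have hS : (1 - a (v (m-1))) + (1 - a (v (m+1))) ≤
        ∑ i ∈ Finset.univ.filter (fun i => Adj (v m) i), (1 - a i) := by
      have := Finset.sum_le_sum_of_subset_of_nonneg (f := fun i => 1 - a i) hsub
        (fun i _ _ => by have h := (ha i).2; linarith)
      rwa [Finset.sum_pair hne] at this
    have h3 := hadj (v m)
    have h4 := hc (v m)
    linarith
  have main : ∀ m, 1 ≤ m → m ≤ n →
      (m : ℝ) * ε ≤ a (v m) ∧ (2 ≤ m → a (v (m-1)) + ε ≤ a (v m)) := by
    intro m
    induction m with
    | zero => omega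
    | succ k ih =>
      intro _ hkn
      by_cases hk0 : k = 0
      · subst hk0
        refine ⟨by simpa using ha1ε, by omega⟩
      · have hk1 : 1 ≤ k := by omega
        obtain ⟨hIH1, hIH2⟩ := ih hk1 (by omega)
        have hkey := key k hk1 hkn
        by_cases hk2 : k = 1
        · subst hk2
          have hw : (3:ℝ) ≤ (w (v 1) : ℝ) := by exact_mod_cast hw1
          have ha1 : 0 ≤ a (v 1) := (ha (v 1)).1
          refine ⟨?_, fun _ => ?_⟩
          · push_cast
            nlinarith
          · simp only [show 1+1-1 = 1 from rfl]
            nlinarith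
        · have hw : (2:ℝ) ≤ (w (v k) : ℝ) := by
            exact_mod_cast hwmid k (by omega) hkn
          have hd := hIH2 (by omega)
          have ha0 : 0 ≤ a (v k) := (ha (v k)).1
          refine ⟨?_, fun _ => ?_⟩
          · push_cast
            push_cast at hIH1
            nlinarith
          · simp only [Nat.add_sub_cancel]
            nlinarith
  have hfin : (n:ℝ) * ε ≤ a (v n) := (main n hn le_rfl).1
  have h1 : (n:ℝ) * ε ≤ 1 := le_trans hfin (ha (v n)).2
  rw [Int.le_floor]
  push_cast
  rw [le_div_iff₀ hε]
  linarith
end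

section
/- Let Γ₁ be the standard set construction: given an increasing sequence a_k in Γ (a DCC set) and projections f(γ) := min{β ∈ Γ'' : β ≥ γ}, g(γ) := max{β ∈ Γ_k : β ≤ f(γ)} where Γ_k is the slice of closure(Γ) in ((k)/N, (k+1)/N], the image Γ' := {g(γ) : γ ∈ Γ} is a finite set. -/
/-!
On the slice `Γ_k` the map `g` factors as `h ∘ f` with `h t = sup (Γ_k ∩ (-∞, t])`, which is
monotone. So `g(Γ_k)` lies in the monotone image of the ACC set `Γ''`, which is again ACC, and
(by closedness) in the DCC set `Γ`; a set of reals with both chain conditions is finite. As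
`Γ ⊆ [0, M]`, finitely many slices cover `Γ`.
-/

theorem IsDCC.isWF {S : Set ℝ} (h : IsDCC S) : S.IsWF := by
  refine Set.isWF_iff_no_descending_seq.2 fun u hu hmem => ?_
  obtain ⟨n, hn⟩ := h u hmem hu.antitone
  exact (hu n.lt_succ_self).ne (hn _ n.le_succ)

theorem IsACC.wellFoundedOn_gt {S : Set ℝ} (h : IsACC S) : S.WellFoundedOn (· > ·) := by
  refine (wellFoundedGT_iff_monotone_chain_condition (α := S)).2 (fun a => ?_) |>.wf
  obtain ⟨n, hn⟩ := h (fun m => a m) (fun m => (a m).2) a.monotone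
  exact ⟨n, fun m hm => Subtype.ext (hn m hm).symm⟩

theorem Set.finite_of_isWF_of_wellFoundedOn_gt {α : Type*} [LinearOrder α] {S : Set α}
    (hlt : S.IsWF) (hgt : S.WellFoundedOn (· > ·)) : S.Finite :=
  have : WellFoundedLT S := ⟨hlt⟩
  have : WellFoundedGT S := ⟨hgt⟩
  Set.finite_coe_iff.1 (Finite.of_wellFoundedLT_wellFoundedGT S)

theorem Set.WellFoundedOn.image_of_monotoneOn {α β : Type*} [LinearOrder α] [Preorder β]
    {S : Set α} {φ : α → β} (hS : S.WellFoundedOn (· > ·)) (hφ : MonotoneOn φ S) :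
    (φ '' S).WellFoundedOn (· > ·) :=
  Set.wellFoundedOn_image.2 <| hS.mono' fun _ ha _ hb h => hφ.reflect_lt hb ha h

theorem monotoneOn_csSup_inter_Iic {α : Type*} [ConditionallyCompleteLattice α] (S : Set α) :
    MonotoneOn (fun t => sSup (S ∩ Set.Iic t)) (upperClosure S) := by
  intro t ht t' _ htt'
  obtain ⟨a, ha, hat⟩ := mem_upperClosure.1 ht
  exact csSup_le_csSup ⟨t', fun _ h => h.2⟩ ⟨a, ha, hat⟩
    (Set.inter_subset_inter_right _ (Set.Iic_subset_Iic.2 htt'))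

theorem exists_mem_slice {Γ : Set ℝ} {N : ℕ} (hN : 0 < N) {slice : ℕ → Set ℝ}
    (hslice0 : slice 0 = Γ ∩ Set.Icc 0 (1 / (N : ℝ)))
    (hslicek : ∀ k : ℕ,
      slice (k + 1) = Γ ∩ Set.Ioc (((k : ℝ) + 1) / N) (((k : ℝ) + 2) / N))
    {γ : ℝ} (hγ : γ ∈ Γ) (h0 : 0 ≤ γ) : ∃ k ≤ ⌈γ * N⌉₊, γ ∈ slice k := by
  have hNpos : (0 : ℝ) < N := by exact_mod_cast hN
  have hle := Nat.le_ceil (γ * N)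
  have hlt := Nat.ceil_lt_add_one (mul_nonneg h0 hNpos.le)
  obtain h | ⟨k, hk⟩ : ⌈γ * N⌉₊ ≤ 1 ∨ ∃ k, ⌈γ * N⌉₊ = k + 2 :=
    (le_or_gt _ 1).imp_right fun h => ⟨_, (Nat.sub_add_cancel h).symm⟩
  · refine ⟨0, Nat.zero_le _, hslice0 ▸ ⟨hγ, h0, ?_⟩⟩
    rw [le_div_iff₀ hNpos]
    exact hle.trans (by exact_mod_cast h)
  · rw [hk] at hle hlt
    push_cast at hle hlt
    refine ⟨k + 1, by omega, hslicek k ▸ ⟨hγ, ?_, ?_⟩⟩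
    · rw [div_lt_iff₀ hNpos]; linarith
    · rw [le_div_iff₀ hNpos]; linarith

theorem stmt_17_general (M : ℝ) (Γ Γ'' : Set ℝ)
    (hΓsub : Γ ⊆ Set.Icc 0 M) (hΓcl : IsClosed Γ) (hdcc : IsDCC Γ)
    (hΓ''cl : IsClosed Γ'') (hacc : IsACC Γ'')
    (hdom : ∀ γ ∈ Γ, ∃ β ∈ Γ'', γ ≤ β)
    (N : ℕ) (hN : 0 < N)
    (slice : ℕ → Set ℝ)
    (hslice0 : slice 0 = Γ ∩ Set.Icc 0 (1 / (N : ℝ)))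
    (hslicek : ∀ k : ℕ,
      slice (k + 1) = Γ ∩ Set.Ioc (((k : ℝ) + 1) / N) (((k : ℝ) + 2) / N))
    (f g : ℝ → ℝ)
    (hf : ∀ γ ∈ Γ, f γ = sInf {β | β ∈ Γ'' ∧ γ ≤ β})
    (hg : ∀ γ ∈ Γ, ∀ k : ℕ, γ ∈ slice k → g γ = sSup {β | β ∈ slice k ∧ β ≤ f γ}) :
    (g '' Γ).Finite := by
  have hslice_sub : ∀ k, slice k ⊆ Γ := by
    rintro (_ | k)
    · exact hslice0 ▸ Set.inter_subset_left
    · exact hslicek k ▸ Set.inter_subset_left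
  have hf_mem : ∀ γ ∈ Γ, f γ ∈ Γ'' ∧ γ ≤ f γ := fun γ hγ => by
    obtain ⟨β, hβ, hγβ⟩ := hdom γ hγ
    rw [hf γ hγ]
    exact (hΓ''cl.inter isClosed_Ici).csInf_mem ⟨β, hβ, hγβ⟩ ⟨γ, fun _ h => h.2⟩
  have hg_mem : ∀ k, ∀ γ ∈ slice k, g γ ∈ Γ ∧
      g γ ∈ (fun t => sSup (slice k ∩ Set.Iic t)) '' (Γ'' ∩ upperClosure (slice k)) := by
    intro k γ hγ
    have hfγ := hf_mem γ (hslice_sub k hγ)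
    have hT : (slice k ∩ Set.Iic (f γ)).Nonempty := ⟨γ, hγ, hfγ.2⟩
    rw [hg γ (hslice_sub k hγ) k hγ]
    exact ⟨hΓcl.closure_subset_iff.2 (Set.inter_subset_left.trans (hslice_sub k))
        (csSup_mem_closure hT ⟨f γ, fun _ h => h.2⟩),
      f γ, ⟨hfγ.1, mem_upperClosure.2 ⟨γ, hγ, hfγ.2⟩⟩, rfl⟩
  have hslice_finite : ∀ k, (g '' slice k).Finite := fun k =>
    Set.finite_of_isWF_of_wellFoundedOn_gt
      (hdcc.isWF.mono (Set.image_subset_iff.2 fun γ hγ => (hg_mem k γ hγ).1))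
      (((hacc.wellFoundedOn_gt.subset Set.inter_subset_left).image_of_monotoneOn
        ((monotoneOn_csSup_inter_Iic _).mono Set.inter_subset_right)).subset
        (Set.image_subset_iff.2 fun γ hγ => (hg_mem k γ hγ).2))
  have hcover : g '' Γ ⊆ ⋃ k ∈ Set.Iic ⌈M * N⌉₊, g '' slice k := by
    rintro _ ⟨γ, hγ, rfl⟩
    obtain ⟨k, hk, hγk⟩ := exists_mem_slice hN hslice0 hslicek hγ (hΓsub hγ).1
    have hγM : ⌈γ * N⌉₊ ≤ ⌈M * N⌉₊ := Nat.ceil_mono (by gcongr; exact (hΓsub hγ).2)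
    exact Set.mem_biUnion (hk.trans hγM) ⟨γ, hγk, rfl⟩
  exact ((Set.finite_Iic _).biUnion fun k _ => hslice_finite k).subset hcover

/-- Claim in the proof of Lemma 4.8: `Γ ⊆ [0, M]` a closed DCC set, `Γ''` a closed ACC set
dominating `Γ` (every `γ ∈ Γ` satisfies `γ ≤ β` for some `β ∈ Γ''`), `N` a positive
integer; slice `Γ` by `Γ₀ = Γ ∩ [0, 1/N]`, `Γ_k = Γ ∩ (k/N, (k+1)/N]` for `k ≥ 1`;
set `f(γ) := min{β ∈ Γ'' : β ≥ γ}` and, for `γ ∈ Γ_k`,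
`g(γ) := max{β ∈ Γ_k : β ≤ f(γ)}`.  Then the image `Γ' := {g(γ) : γ ∈ Γ}` is finite. -/
theorem stmt_17 (M : ℝ) (hM : 1 ≤ M) (Γ Γ'' : Set ℝ)
    (hΓsub : Γ ⊆ Set.Icc 0 M) (hΓcl : IsClosed Γ) (hdcc : IsDCC Γ)
    (hΓ''cl : IsClosed Γ'') (hacc : IsACC Γ'')
    (hdom : ∀ γ ∈ Γ, ∃ β ∈ Γ'', γ ≤ β)
    (N : ℕ) (hN : 0 < N)
    (slice : ℕ → Set ℝ)
    (hslice0 : slice 0 = Γ ∩ Set.Icc 0 (1 / (N : ℝ)))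
    (hslicek : ∀ k : ℕ,
      slice (k + 1) = Γ ∩ Set.Ioc (((k : ℝ) + 1) / N) (((k : ℝ) + 2) / N))
    (f g : ℝ → ℝ)
    (hf : ∀ γ ∈ Γ, f γ = sInf {β | β ∈ Γ'' ∧ γ ≤ β})
    (hg : ∀ γ ∈ Γ, ∀ k : ℕ, γ ∈ slice k → g γ = sSup {β | β ∈ slice k ∧ β ≤ f γ}) :
    (g '' Γ).Finite :=
  stmt_17_general M Γ Γ'' hΓsub hΓcl hdcc hΓ''cl hacc hdom N hN slice hslice0 hslicek f g hf hg
end
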